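/- arXiv:2107.06938 — 3 statements merged into one kernel-verified Lean document; each statement's English description precedes it below -/
import Mathlib

section
/- For any partition λ of weight d, the number f^λ of standard Young tableaux of shape λ equals d! · Δ_λ(exp(t)), where Δ_λ(exp(t)) = det(1/(λⱼ - j + i)!)_{1≤i,j≤r} is the Schur determinant attached to the exponential power series (with the convention 1/m! = 0 for m < 0). -/
open MvPolynomial
open scoped Classical

/-- `S n` : coefficients of `exp(∑ xᵢ tⁱ)`. -/
noncomputable def S : ℕ → MvPolynomial ℕ ℚ
  | 0 => 1
  | (n+1) => ((n+1 : ℚ))⁻¹ •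
      ∑ i ∈ Finset.range (n+1), ((i+1 : ℚ)) • (X (i+1) * S (n - i))
  decreasing_by exact Nat.lt_succ_of_le (Nat.sub_le n i)

noncomputable def Sint (m : ℤ) : MvPolynomial ℕ ℚ :=
  if 0 ≤ m then S m.toNat else 0

noncomputable def SchurPoly (μ : YoungDiagram) : MvPolynomial ℕ ℚ :=
  Matrix.det (Matrix.of fun i j : Fin (μ.colLen 0) =>
    Sint ((μ.rowLen j : ℤ) - (j : ℤ) + (i : ℤ)))

/-- number of standard Young tableaux of shape μ -/
noncomputable def fSYT (μ : YoungDiagram) : ℕ :=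
  Set.ncard {T : {c // c ∈ μ.cells} ≃ Fin μ.card |
    ∀ c d : {c // c ∈ μ.cells}, (c : ℕ × ℕ).1 ≤ (d : ℕ × ℕ).1 →
      (c : ℕ × ℕ).2 ≤ (d : ℕ × ℕ).2 → c ≠ d → T c < T d}

def toYD {n : ℕ} (p : n.Partition) : YoungDiagram :=
  YoungDiagram.ofRowLens (p.parts.sort (· ≥ ·)) (List.sortedGE_iff_pairwise.mpr (p.parts.pairwise_sort _))

noncomputable def einv (m : ℤ) : ℚ :=
  if 0 ≤ m then ((Nat.factorial m.toNat : ℚ))⁻¹ else 0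

noncomputable def ExpDelta (μ : YoungDiagram) : ℚ :=
  Matrix.det (Matrix.of fun i j : Fin (μ.colLen 0) =>
    einv ((μ.rowLen j : ℤ) - (j : ℤ) + (i : ℤ)))

def hookLen (μ : YoungDiagram) (c : ℕ × ℕ) : ℕ :=
  μ.rowLen c.1 - c.2 + (μ.colLen c.2 - c.1) - 1

noncomputable def hpoly (r m : ℕ) : MvPolynomial (Fin r) ℚ :=
  ∑ f ∈ Finset.univ.filter (fun f : Fin m → Fin r => ∀ i j, i ≤ j → f i ≤ f j),
    ∏ i, X (f i)

noncomputable def hpolyInt (r : ℕ) (m : ℤ) : MvPolynomial (Fin r) ℚ :=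
  if 0 ≤ m then hpoly r m.toNat else 0

noncomputable def sPoly (r : ℕ) (μ : YoungDiagram) : MvPolynomial (Fin r) ℚ :=
  Matrix.det (Matrix.of fun i j : Fin r => hpolyInt r ((μ.rowLen j : ℤ) - (j : ℤ) + (i : ℤ)))

noncomputable def Dop : ℕ → (MvPolynomial ℕ ℚ →ₗ[ℚ] MvPolynomial ℕ ℚ)
  | 0 => LinearMap.id
  | (n+1) => ((n+1 : ℚ))⁻¹ •
      ∑ i ∈ Finset.range (n+1), ((pderiv (i+1)).toLinearMap).comp (Dop (n - i))
  decreasing_by exact Nat.lt_succ_of_le (Nat.sub_le n i)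

noncomputable def Xw (r : ℕ) (μ : YoungDiagram) : ExteriorAlgebra ℚ (Polynomial ℚ) :=
  (List.ofFn fun k : Fin r =>
    ExteriorAlgebra.ι ℚ (Polynomial.X ^ (r - 1 - (k : ℕ) + μ.rowLen k))).prod



lemma einv_sub_one (m : ℤ) : einv (m - 1) = (m : ℚ) * einv m := by
  rcases lt_trichotomy m 0 with h | h | h
  · rw [einv, einv, if_neg (by omega), if_neg (by omega), mul_zero]
  · subst h; simp [einv]
  · rw [einv, einv, if_pos (by omega), if_pos (by omega)]
    obtain ⟨n, rfl⟩ : ∃ n : ℕ, m = (n : ℤ) + 1 := ⟨(m - 1).toNat, by omega⟩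
    have : ((n:ℤ) + 1 - 1).toNat = n := by omega
    rw [this]
    have : ((n:ℤ) + 1).toNat = n + 1 := by omega
    rw [this, Nat.factorial_succ]
    have h1 : (Nat.factorial n : ℚ) ≠ 0 := Nat.cast_ne_zero.mpr (Nat.factorial_ne_zero n)
    push_cast
    field_simp

noncomputable def Ddet (r : ℕ) (a : Fin r → ℤ) : ℚ :=
  Matrix.det (Matrix.of fun i j : Fin r => einv (a j + i))

lemma Ddet_key (r : ℕ) (a : Fin r → ℤ) :
    ∑ j : Fin r, Ddet r (Function.update a j (a j - 1)) =
      ((∑ j : Fin r, a j : ℤ) + (∑ j : Fin r, (j : ℤ)) : ℚ) * Ddet r a := by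
  unfold Ddet
  simp only [Matrix.det_apply, Matrix.of_apply]
  rw [Finset.sum_comm, Finset.mul_sum]
  refine Finset.sum_congr rfl fun σ _ => ?_
  have key : ∑ j : Fin r, ∏ i : Fin r, einv (Function.update a j (a j - 1) i + (σ i : ℤ)) =
      ((∑ j : Fin r, a j : ℤ) + (∑ j : Fin r, (j : ℤ)) : ℚ) * ∏ i : Fin r, einv (a i + (σ i : ℤ)) := by
    have hterm : ∀ j : Fin r, (∏ i : Fin r, einv (Function.update a j (a j - 1) i + (σ i : ℤ))) =
        ((a j + (σ j : ℤ) : ℤ) : ℚ) * ∏ i : Fin r, einv (a i + (σ i : ℤ)) := by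
      intro j
      have hfun : (fun i : Fin r => einv (Function.update a j (a j - 1) i + (σ i : ℤ))) =
          Function.update (fun i : Fin r => einv (a i + (σ i : ℤ))) j (einv (a j - 1 + (σ j : ℤ))) := by
        funext i
        by_cases h : i = j
        · subst h; simp
        · simp [Function.update_of_ne h]
      rw [hfun, Finset.prod_update_of_mem (Finset.mem_univ j)]
      have : a j - 1 + (σ j : ℤ) = (a j + (σ j : ℤ)) - 1 := by ring
      rw [this, einv_sub_one, mul_assoc]
      congr 1
      rw [← Finset.prod_update_of_mem (Finset.mem_univ j)]
      · refine Finset.prod_congr rfl fun i _ => ?_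
        by_cases h : i = j
        · subst h; simp
        · simp [Function.update_of_ne h]
    rw [Finset.sum_congr rfl (fun j _ => hterm j), ← Finset.sum_mul]
    congr 1
    push_cast
    rw [Finset.sum_add_distrib]
    congr 1
    exact (Equiv.sum_comp σ (fun j : Fin r => ((j : ℕ) : ℚ)))
  simp only [Units.smul_def, zsmul_eq_mul]
  rw [← Finset.mul_sum, key]
  ring

lemma Ddet_pad (r : ℕ) (a : Fin (r+1) → ℤ) (h : a (Fin.last r) = -(r : ℤ)) :
    Ddet (r+1) a = Ddet r (a ∘ Fin.castSucc) := by
  unfold Ddet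
  rw [Matrix.det_succ_column _ (Fin.last r)]
  rw [Finset.sum_eq_single (Fin.last r)]
  · have h0 : a (Fin.last r) + ((Fin.last r : Fin (r+1)) : ℕ) = 0 := by
      rw [h]; simp
    rw [Matrix.of_apply, h0]
    have : einv 0 = 1 := by simp [einv]
    rw [this]
    rw [Fin.succAbove_last]
    simp only [mul_one, one_mul]
    rw [show ((-1 : ℚ)) ^ ((Fin.last r : ℕ) + (Fin.last r : ℕ)) = 1 by
      rw [← two_mul]; exact Even.neg_one_pow ⟨(Fin.last r : ℕ), (two_mul _)⟩]
    rw [one_mul]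
    rfl
  · intro i _ hi
    have hlt : (i : ℕ) < r := by
      have := i.isLt
      rcases Fin.lt_last_iff_ne_last.mpr hi with h2
      exact h2
    have : einv (a (Fin.last r) + i) = 0 := by
      rw [h, einv, if_neg (by push_cast; omega)]
    simp [this]
  · simp

lemma Ddet_zero_of_eq (r : ℕ) (a : Fin r → ℤ) (j k : Fin r) (hjk : j ≠ k) (h : a j = a k) :
    Ddet r a = 0 := by
  unfold Ddet
  apply Matrix.det_zero_of_column_eq hjk
  intro i
  simp [h]

namespace YD

lemma rowLen_pos_iff (μ : YoungDiagram) (i : ℕ) : 0 < μ.rowLen i ↔ i < μ.colLen 0 := by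
  rw [← YoungDiagram.mem_iff_lt_rowLen, ← YoungDiagram.mem_iff_lt_colLen]

lemma rowLen_eq {ν : YoungDiagram} {k L : ℕ} (h2 : (k, L) ∉ ν) (h1 : ∀ j, j < L → (k, j) ∈ ν) :
    ν.rowLen k = L := by
  have hle : ν.rowLen k ≤ L := by
    by_contra hc
    exact h2 (YoungDiagram.mem_iff_lt_rowLen.mpr (by omega))
  have hge : L ≤ ν.rowLen k := by
    rcases Nat.eq_zero_or_pos L with h | h
    · omega
    · have := YoungDiagram.mem_iff_lt_rowLen.mp (h1 (L-1) (by omega))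
      omega
  omega

lemma colLen_eq {ν : YoungDiagram} {L : ℕ} (h2 : (L, 0) ∉ ν) (h1 : ∀ i, i < L → (i, 0) ∈ ν) :
    ν.colLen 0 = L := by
  have hle : ν.colLen 0 ≤ L := by
    by_contra hc
    exact h2 (YoungDiagram.mem_iff_lt_colLen.mpr (by omega))
  have hge : L ≤ ν.colLen 0 := by
    rcases Nat.eq_zero_or_pos L with h | h
    · omega
    · have := YoungDiagram.mem_iff_lt_colLen.mp (h1 (L-1) (by omega))
      omega
  omega

lemma card_eq_sum (μ : YoungDiagram) :
    μ.card = ∑ i : Fin (μ.colLen 0), μ.rowLen (i : ℕ) := by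
  classical
  have hcells : μ.cells = (Finset.range (μ.colLen 0)).biUnion (fun i => μ.row i) := by
    ext c
    simp only [Finset.mem_biUnion, Finset.mem_range, YoungDiagram.mem_row_iff]
    constructor
    · intro hc
      refine ⟨c.1, ?_, (μ.mem_cells c).mp hc, rfl⟩
      rw [← YoungDiagram.mem_iff_lt_colLen]
      exact μ.up_left_mem le_rfl (Nat.zero_le _) ((μ.mem_cells c).mp hc)
    · rintro ⟨i, _, hc, rfl⟩
      exact (μ.mem_cells c).mpr hc
  show μ.cells.card = _
  rw [hcells, Finset.card_biUnion, ← Fin.sum_univ_eq_sum_range (fun i => (μ.row i).card)]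
  · exact Finset.sum_congr rfl fun i _ => (μ.rowLen_eq_card (i := (i:ℕ))).symm
  · intro x _ y _ hxy
    simp only [Finset.disjoint_left, YoungDiagram.mem_row_iff]
    rintro c ⟨_, h1⟩ ⟨_, h2⟩
    exact hxy (h1.symm.trans h2)

def Removable (μ : YoungDiagram) (i : ℕ) : Prop := μ.rowLen (i+1) < μ.rowLen i

/-- the unique corner cell in a removable row -/
def corner (μ : YoungDiagram) (i : ℕ) : ℕ × ℕ := (i, μ.rowLen i - 1)

lemma corner_mem (μ : YoungDiagram) (i : ℕ) (h : Removable μ i) : corner μ i ∈ μ :=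
  YoungDiagram.mem_iff_lt_rowLen.mpr (by unfold Removable at h; omega)

lemma corner_maximal (μ : YoungDiagram) (i : ℕ) (h : Removable μ i) :
    ∀ d ∈ μ, corner μ i ≤ d → d = corner μ i := by
  rintro ⟨d1, d2⟩ hd ⟨hle1, hle2⟩
  simp only [corner] at *
  have hL : 0 < μ.rowLen i := by unfold Removable at h; omega
  by_cases h2 : μ.rowLen i ≤ d2
  · exfalso
    have : (i, μ.rowLen i) ∈ μ := μ.up_left_mem hle1 h2 hd
    rw [YoungDiagram.mem_iff_lt_rowLen] at this
    omega
  · -- d2 = rowLen i - 1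
    have hd2 : d2 = μ.rowLen i - 1 := by omega
    by_cases h1 : i + 1 ≤ d1
    · exfalso
      have : (i+1, μ.rowLen i - 1) ∈ μ := μ.up_left_mem h1 hle2 hd
      rw [YoungDiagram.mem_iff_lt_rowLen] at this
      unfold Removable at h
      omega
    · have : d1 = i := by omega
      simp [this, hd2]

def eraseYD (μ : YoungDiagram) (i : ℕ) (h : Removable μ i) : YoungDiagram where
  cells := μ.cells.erase (corner μ i)
  isLowerSet := by
    intro a b hba ha
    simp only [Finset.coe_erase, Set.mem_diff, Set.mem_singleton_iff] at ha ⊢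
    refine ⟨μ.isLowerSet hba ((μ.mem_cells a).mp ha.1), ?_⟩
    rintro rfl
    exact ha.2 (corner_maximal μ i h a ((μ.mem_cells a).mp ha.1) hba)

lemma mem_eraseYD {μ : YoungDiagram} {i : ℕ} {h : Removable μ i} {c : ℕ × ℕ} :
    c ∈ eraseYD μ i h ↔ c ∈ μ ∧ c ≠ corner μ i := by
  show c ∈ (eraseYD μ i h).cells ↔ _
  simp only [eraseYD, Finset.mem_erase]
  rw [YoungDiagram.mem_cells]
  tauto

lemma card_eraseYD {μ : YoungDiagram} {i : ℕ} (h : Removable μ i) :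
    (eraseYD μ i h).card = μ.card - 1 := by
  show (μ.cells.erase (corner μ i)).card = _
  rw [Finset.card_erase_of_mem ((μ.mem_cells _).mpr (corner_mem μ i h))]

lemma rowLen_eraseYD_self {μ : YoungDiagram} {i : ℕ} (h : Removable μ i) :
    (eraseYD μ i h).rowLen i = μ.rowLen i - 1 := by
  have hL : 0 < μ.rowLen i := by unfold Removable at h; omega
  apply rowLen_eq
  · rw [mem_eraseYD]
    rintro ⟨hmem, hne⟩
    exact hne rfl
  · intro j hj
    rw [mem_eraseYD]
    constructor
    · exact YoungDiagram.mem_iff_lt_rowLen.mpr (by omega)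
    · simp only [corner, ne_eq, Prod.mk.injEq]
      rintro ⟨-, rfl⟩
      omega

lemma rowLen_eraseYD_ne {μ : YoungDiagram} {i : ℕ} (h : Removable μ i) {k : ℕ} (hk : k ≠ i) :
    (eraseYD μ i h).rowLen k = μ.rowLen k := by
  apply rowLen_eq
  · rw [mem_eraseYD]
    rintro ⟨hmem, -⟩
    rw [YoungDiagram.mem_iff_lt_rowLen] at hmem
    omega
  · intro j hj
    rw [mem_eraseYD]
    refine ⟨YoungDiagram.mem_iff_lt_rowLen.mpr hj, ?_⟩
    simp only [corner, ne_eq, Prod.mk.injEq]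
    rintro ⟨rfl, -⟩
    exact hk rfl

lemma colLen_eraseYD_of_two_le {μ : YoungDiagram} {i : ℕ} (h : Removable μ i)
    (h2 : 2 ≤ μ.rowLen i) : (eraseYD μ i h).colLen 0 = μ.colLen 0 := by
  apply colLen_eq
  · rw [mem_eraseYD]
    rintro ⟨hmem, -⟩
    rw [YoungDiagram.mem_iff_lt_colLen] at hmem
    omega
  · intro k hk
    rw [mem_eraseYD]
    refine ⟨YoungDiagram.mem_iff_lt_colLen.mpr hk, ?_⟩
    simp only [corner, ne_eq, Prod.mk.injEq]
    rintro ⟨rfl, h0⟩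
    omega

lemma last_row_of_rowLen_one {μ : YoungDiagram} {i : ℕ} (h : Removable μ i)
    (h1 : μ.rowLen i = 1) : μ.colLen 0 = i + 1 := by
  apply colLen_eq
  · rw [YoungDiagram.mem_iff_lt_rowLen]
    unfold Removable at h
    omega
  · intro k hk
    rw [YoungDiagram.mem_iff_lt_rowLen]
    have := μ.rowLen_anti k i (by omega)
    omega

lemma colLen_eraseYD_of_one {μ : YoungDiagram} {i : ℕ} (h : Removable μ i)
    (h1 : μ.rowLen i = 1) : (eraseYD μ i h).colLen 0 = i := by
  apply colLen_eq
  · rw [mem_eraseYD]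
    rintro ⟨-, hne⟩
    apply hne
    simp [corner, h1]
  · intro k hk
    rw [mem_eraseYD]
    constructor
    · rw [YoungDiagram.mem_iff_lt_rowLen]
      have := μ.rowLen_anti k i (by omega)
      omega
    · simp only [corner, ne_eq, Prod.mk.injEq]
      rintro ⟨rfl, -⟩
      omega

end YD


namespace YD

def IsSYT (μ : YoungDiagram) (T : {c // c ∈ μ.cells} ≃ Fin μ.card) : Prop :=
  ∀ c d : {c // c ∈ μ.cells}, (c : ℕ × ℕ).1 ≤ (d : ℕ × ℕ).1 →
      (c : ℕ × ℕ).2 ≤ (d : ℕ × ℕ).2 → c ≠ d → T c < T d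

lemma fSYT_eq (μ : YoungDiagram) :
    fSYT μ = (Finset.univ.filter (IsSYT μ)).card := by
  rw [fSYT, Set.ncard_eq_toFinset_card']
  congr 1
  ext T
  simp [IsSYT]

end YD

namespace YD

lemma maxcell {μ : YoungDiagram} (hpos : 0 < μ.card)
    {T : {c // c ∈ μ.cells} ≃ Fin μ.card} (hT : IsSYT μ T) :
    Removable μ ((T.symm ⟨μ.card - 1, Nat.sub_lt hpos one_pos⟩ : {c // c ∈ μ.cells}) : ℕ × ℕ).1 ∧
    ((T.symm ⟨μ.card - 1, Nat.sub_lt hpos one_pos⟩ : {c // c ∈ μ.cells}) : ℕ × ℕ) =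
      corner μ ((T.symm ⟨μ.card - 1, Nat.sub_lt hpos one_pos⟩ : {c // c ∈ μ.cells}) : ℕ × ℕ).1 := by
  set top : Fin μ.card := ⟨μ.card - 1, Nat.sub_lt hpos one_pos⟩ with htop
  set c : {c // c ∈ μ.cells} := T.symm top with hc
  have hcmem : (c : ℕ × ℕ) ∈ μ := (μ.mem_cells _).mp c.2
  have hTc : T c = top := by rw [hc, Equiv.apply_symm_apply]
  have hmax : ∀ d : {c // c ∈ μ.cells}, ¬ (T c < T d) := by
    intro d hd
    rw [hTc] at hd
    have := (T d).isLt
    have : (T d : ℕ) < μ.card := this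
    rw [Fin.lt_def] at hd
    simp only [htop] at hd
    omega
  have hright : ((c : ℕ × ℕ).1, (c : ℕ × ℕ).2 + 1) ∉ μ := by
    intro hmem
    refine hmax ⟨((c : ℕ × ℕ).1, (c : ℕ × ℕ).2 + 1), (μ.mem_cells _).mpr hmem⟩ ?_
    exact hT c _ le_rfl (Nat.le_succ _) (by
      intro heq
      have := congrArg (fun x : {c // c ∈ μ.cells} => (x : ℕ × ℕ).2) heq
      simp at this)
  have hdown : ((c : ℕ × ℕ).1 + 1, (c : ℕ × ℕ).2) ∉ μ := by
    intro hmem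
    refine hmax ⟨((c : ℕ × ℕ).1 + 1, (c : ℕ × ℕ).2), (μ.mem_cells _).mpr hmem⟩ ?_
    exact hT c _ (Nat.le_succ _) le_rfl (by
      intro heq
      have := congrArg (fun x : {c // c ∈ μ.cells} => (x : ℕ × ℕ).1) heq
      simp at this)
  have h1 : (c : ℕ × ℕ).2 < μ.rowLen (c : ℕ × ℕ).1 := by
    rw [← YoungDiagram.mem_iff_lt_rowLen]
    exact (Prod.mk.eta (p := (c : ℕ × ℕ))) ▸ hcmem
  have h2 : ¬ ((c : ℕ × ℕ).2 + 1 < μ.rowLen (c : ℕ × ℕ).1) := by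
    rw [← YoungDiagram.mem_iff_lt_rowLen]
    exact hright
  have h3 : ¬ ((c : ℕ × ℕ).2 < μ.rowLen ((c : ℕ × ℕ).1 + 1)) := by
    rw [← YoungDiagram.mem_iff_lt_rowLen]
    exact hdown
  constructor
  · unfold Removable; omega
  · unfold corner
    have : (c : ℕ × ℕ).2 = μ.rowLen (c : ℕ × ℕ).1 - 1 := by omega
    rw [← this]

end YD

namespace YD

variable {μ : YoungDiagram} {i : ℕ}

lemma card_cells_sub (μ : YoungDiagram) : Fintype.card {c // c ∈ μ.cells} = μ.card :=
  Fintype.card_coe _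

noncomputable def restrictT (h : Removable μ i) (hpos : 0 < μ.card)
    (T : {c // c ∈ μ.cells} ≃ Fin μ.card)
    (hmax : ((T.symm ⟨μ.card - 1, Nat.sub_lt hpos one_pos⟩ : {c // c ∈ μ.cells}) : ℕ × ℕ) =
      corner μ i) :
    {c // c ∈ (eraseYD μ i h).cells} ≃ Fin (eraseYD μ i h).card := by
  have hmem : ∀ d : {c // c ∈ (eraseYD μ i h).cells}, (d : ℕ × ℕ) ∈ μ.cells := by
    intro d
    have := (mem_eraseYD (h := h)).mp (((eraseYD μ i h).mem_cells _).mp d.2)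
    exact (μ.mem_cells _).mpr this.1
  have hlt : ∀ d : {c // c ∈ (eraseYD μ i h).cells},
      ((T ⟨(d : ℕ × ℕ), hmem d⟩ : Fin μ.card) : ℕ) < (eraseYD μ i h).card := by
    intro d
    have hne : T ⟨(d : ℕ × ℕ), hmem d⟩ ≠ ⟨μ.card - 1, Nat.sub_lt hpos one_pos⟩ := by
      intro heq
      have : (⟨(d : ℕ × ℕ), hmem d⟩ : {c // c ∈ μ.cells}) =
          T.symm ⟨μ.card - 1, Nat.sub_lt hpos one_pos⟩ := by
        rw [← heq, Equiv.symm_apply_apply]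
      have hcoord : (d : ℕ × ℕ) = corner μ i := by
        rw [← hmax, ← this]
      have := (mem_eraseYD (h := h)).mp (((eraseYD μ i h).mem_cells _).mp d.2)
      exact this.2 hcoord
    have h1 := (T ⟨(d : ℕ × ℕ), hmem d⟩).isLt
    have h2 : ((T ⟨(d : ℕ × ℕ), hmem d⟩ : Fin μ.card) : ℕ) ≠ μ.card - 1 := by
      intro heq
      exact hne (Fin.ext heq)
    rw [card_eraseYD h]
    omega
  refine Equiv.ofBijective (fun d => ⟨(T ⟨(d : ℕ × ℕ), hmem d⟩ : ℕ), hlt d⟩) ?_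
  rw [Fintype.bijective_iff_injective_and_card]
  constructor
  · intro d1 d2 heq
    simp only [Fin.mk.injEq] at heq
    have : (⟨(d1 : ℕ × ℕ), hmem d1⟩ : {c // c ∈ μ.cells}) = ⟨(d2 : ℕ × ℕ), hmem d2⟩ :=
      T.injective (Fin.ext heq)
    have h3 := congrArg Subtype.val this
    exact Subtype.ext h3
  · rw [card_cells_sub, Fintype.card_fin]

noncomputable def extendT (h : Removable μ i) (hpos : 0 < μ.card)
    (T' : {c // c ∈ (eraseYD μ i h).cells} ≃ Fin (eraseYD μ i h).card) :
    {c // c ∈ μ.cells} ≃ Fin μ.card := by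
  have hmem : ∀ d : {c // c ∈ μ.cells}, (d : ℕ × ℕ) ≠ corner μ i →
      (d : ℕ × ℕ) ∈ (eraseYD μ i h).cells := by
    intro d hd
    exact ((eraseYD μ i h).mem_cells _).mpr
      ((mem_eraseYD (h := h)).mpr ⟨(μ.mem_cells _).mp d.2, hd⟩)
  have hlt : ∀ (d : {c // c ∈ (eraseYD μ i h).cells}), ((T' d : Fin _) : ℕ) < μ.card := by
    intro d
    have h1 := (T' d).isLt
    have h2 := card_eraseYD h
    omega
  refine Equiv.ofBijective (fun d =>
    if hd : (d : ℕ × ℕ) = corner μ i then ⟨μ.card - 1, Nat.sub_lt hpos one_pos⟩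
    else ⟨(T' ⟨(d : ℕ × ℕ), hmem d hd⟩ : ℕ), hlt _⟩) ?_
  rw [Fintype.bijective_iff_injective_and_card]
  constructor
  · intro d1 d2 heq
    beta_reduce at heq
    by_cases h1 : (d1 : ℕ × ℕ) = corner μ i <;> by_cases h2 : (d2 : ℕ × ℕ) = corner μ i
    · exact Subtype.ext (h1.trans h2.symm)
    · exfalso
      rw [dif_pos h1, dif_neg h2] at heq
      have hval := congrArg Fin.val heq
      simp only at hval
      have := (T' ⟨(d2 : ℕ × ℕ), hmem d2 h2⟩).isLt
      have hce := card_eraseYD h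
      omega
    · exfalso
      rw [dif_neg h1, dif_pos h2] at heq
      have hval := congrArg Fin.val heq
      simp only at hval
      have := (T' ⟨(d1 : ℕ × ℕ), hmem d1 h1⟩).isLt
      have hce := card_eraseYD h
      omega
    · rw [dif_neg h1, dif_neg h2] at heq
      have hval := congrArg Fin.val heq
      simp only at hval
      have : (⟨(d1 : ℕ × ℕ), hmem d1 h1⟩ : {c // c ∈ (eraseYD μ i h).cells}) =
          ⟨(d2 : ℕ × ℕ), hmem d2 h2⟩ := T'.injective (Fin.ext hval)
      have h3 := congrArg Subtype.val this
      exact Subtype.ext h3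
  · rw [card_cells_sub, Fintype.card_fin]

end YD

namespace YD

variable {μ : YoungDiagram} {i : ℕ}

lemma restrictT_apply_val (h : Removable μ i) (hpos : 0 < μ.card)
    (T : {c // c ∈ μ.cells} ≃ Fin μ.card)
    (hmax : ((T.symm ⟨μ.card - 1, Nat.sub_lt hpos one_pos⟩ : {c // c ∈ μ.cells}) : ℕ × ℕ) =
      corner μ i)
    (d : {c // c ∈ (eraseYD μ i h).cells}) (hd : (d : ℕ × ℕ) ∈ μ.cells) :
    ((restrictT h hpos T hmax d : Fin _) : ℕ) = ((T ⟨(d : ℕ × ℕ), hd⟩ : Fin _) : ℕ) := rfl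

lemma extendT_apply_corner (h : Removable μ i) (hpos : 0 < μ.card)
    (T' : {c // c ∈ (eraseYD μ i h).cells} ≃ Fin (eraseYD μ i h).card)
    (d : {c // c ∈ μ.cells}) (hd : (d : ℕ × ℕ) = corner μ i) :
    extendT h hpos T' d = ⟨μ.card - 1, Nat.sub_lt hpos one_pos⟩ := by
  unfold extendT
  simp only [Equiv.ofBijective_apply, dif_pos hd]

lemma extendT_apply_ne (h : Removable μ i) (hpos : 0 < μ.card)
    (T' : {c // c ∈ (eraseYD μ i h).cells} ≃ Fin (eraseYD μ i h).card)
    (d : {c // c ∈ μ.cells}) (hd : (d : ℕ × ℕ) ≠ corner μ i)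
    (hd' : (d : ℕ × ℕ) ∈ (eraseYD μ i h).cells) :
    ((extendT h hpos T' d : Fin _) : ℕ) = ((T' ⟨(d : ℕ × ℕ), hd'⟩ : Fin _) : ℕ) := by
  unfold extendT
  simp only [Equiv.ofBijective_apply, dif_neg hd]

end YD

namespace YD

variable {μ : YoungDiagram} {i : ℕ}

lemma restrictT_SYT (h : Removable μ i) (hpos : 0 < μ.card)
    (T : {c // c ∈ μ.cells} ≃ Fin μ.card)
    (hmax : ((T.symm ⟨μ.card - 1, Nat.sub_lt hpos one_pos⟩ : {c // c ∈ μ.cells}) : ℕ × ℕ) =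
      corner μ i) (hT : IsSYT μ T) :
    IsSYT (eraseYD μ i h) (restrictT h hpos T hmax) := by
  intro c d h1 h2 hne
  have hcm : (c : ℕ × ℕ) ∈ μ.cells := by
    have := (mem_eraseYD (h := h)).mp (((eraseYD μ i h).mem_cells _).mp c.2)
    exact (μ.mem_cells _).mpr this.1
  have hdm : (d : ℕ × ℕ) ∈ μ.cells := by
    have := (mem_eraseYD (h := h)).mp (((eraseYD μ i h).mem_cells _).mp d.2)
    exact (μ.mem_cells _).mpr this.1
  rw [Fin.lt_def, restrictT_apply_val h hpos T hmax c hcm, restrictT_apply_val h hpos T hmax d hdm]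
  have hne' : (⟨(c : ℕ × ℕ), hcm⟩ : {c // c ∈ μ.cells}) ≠ ⟨(d : ℕ × ℕ), hdm⟩ := by
    intro heq
    have h9 := congrArg Subtype.val heq
    exact hne (Subtype.ext h9)
  exact hT _ _ h1 h2 hne'

lemma extendT_SYT (h : Removable μ i) (hpos : 0 < μ.card)
    (T' : {c // c ∈ (eraseYD μ i h).cells} ≃ Fin (eraseYD μ i h).card)
    (hT' : IsSYT (eraseYD μ i h) T') : IsSYT μ (extendT h hpos T') := by
  intro c d h1 h2 hne
  by_cases hd : (d : ℕ × ℕ) = corner μ i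
  · have hc : (c : ℕ × ℕ) ≠ corner μ i := by
      intro hc
      exact hne (Subtype.ext (hc.trans hd.symm))
    have hcm : (c : ℕ × ℕ) ∈ (eraseYD μ i h).cells :=
      ((eraseYD μ i h).mem_cells _).mpr
        ((mem_eraseYD (h := h)).mpr ⟨(μ.mem_cells _).mp c.2, hc⟩)
    rw [Fin.lt_def, extendT_apply_ne h hpos T' c hc hcm,
      congrArg Fin.val (extendT_apply_corner h hpos T' d hd)]
    have := (T' ⟨(c : ℕ × ℕ), hcm⟩).isLt
    have hce := card_eraseYD h
    have hk : ((⟨μ.card - 1, Nat.sub_lt hpos one_pos⟩ : Fin μ.card) : ℕ) = μ.card - 1 := rfl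
    rw [hk]
    omega
  · by_cases hc : (c : ℕ × ℕ) = corner μ i
    · exfalso
      have hdmem : (d : ℕ × ℕ) ∈ μ := (μ.mem_cells _).mp d.2
      have hle : corner μ i ≤ (d : ℕ × ℕ) := by
        rw [← hc]
        exact ⟨h1, h2⟩
      exact hd (corner_maximal μ i h _ hdmem hle)
    · have hcm : (c : ℕ × ℕ) ∈ (eraseYD μ i h).cells :=
        ((eraseYD μ i h).mem_cells _).mpr
          ((mem_eraseYD (h := h)).mpr ⟨(μ.mem_cells _).mp c.2, hc⟩)
      have hdm : (d : ℕ × ℕ) ∈ (eraseYD μ i h).cells :=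
        ((eraseYD μ i h).mem_cells _).mpr
          ((mem_eraseYD (h := h)).mpr ⟨(μ.mem_cells _).mp d.2, hd⟩)
      rw [Fin.lt_def, extendT_apply_ne h hpos T' c hc hcm, extendT_apply_ne h hpos T' d hd hdm]
      have hne' : (⟨(c : ℕ × ℕ), hcm⟩ : {c // c ∈ (eraseYD μ i h).cells}) ≠ ⟨(d : ℕ × ℕ), hdm⟩ := by
        intro heq
        have h9 := congrArg Subtype.val heq
        exact hne (Subtype.ext h9)
      exact hT' _ _ h1 h2 hne'

lemma extendT_max (h : Removable μ i) (hpos : 0 < μ.card)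
    (T' : {c // c ∈ (eraseYD μ i h).cells} ≃ Fin (eraseYD μ i h).card) :
    (((extendT h hpos T').symm ⟨μ.card - 1, Nat.sub_lt hpos one_pos⟩ :
      {c // c ∈ μ.cells}) : ℕ × ℕ) = corner μ i := by
  have hcm : corner μ i ∈ μ.cells := (μ.mem_cells _).mpr (corner_mem μ i h)
  have : extendT h hpos T' ⟨corner μ i, hcm⟩ = ⟨μ.card - 1, Nat.sub_lt hpos one_pos⟩ :=
    extendT_apply_corner h hpos T' _ rfl
  rw [← this, Equiv.symm_apply_apply]

lemma extendT_restrictT (h : Removable μ i) (hpos : 0 < μ.card)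
    (T : {c // c ∈ μ.cells} ≃ Fin μ.card)
    (hmax : ((T.symm ⟨μ.card - 1, Nat.sub_lt hpos one_pos⟩ : {c // c ∈ μ.cells}) : ℕ × ℕ) =
      corner μ i) :
    extendT h hpos (restrictT h hpos T hmax) = T := by
  apply Equiv.ext
  intro d
  by_cases hd : (d : ℕ × ℕ) = corner μ i
  · rw [extendT_apply_corner h hpos _ d hd]
    have : d = T.symm ⟨μ.card - 1, Nat.sub_lt hpos one_pos⟩ := by
      apply Subtype.ext
      rw [hd, hmax]
    rw [this, Equiv.apply_symm_apply]
  · have hdm : (d : ℕ × ℕ) ∈ (eraseYD μ i h).cells :=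
      ((eraseYD μ i h).mem_cells _).mpr
        ((mem_eraseYD (h := h)).mpr ⟨(μ.mem_cells _).mp d.2, hd⟩)
    apply Fin.ext
    rw [extendT_apply_ne h hpos _ d hd hdm,
      restrictT_apply_val h hpos T hmax ⟨(d : ℕ × ℕ), hdm⟩ d.2]

lemma restrictT_extendT (h : Removable μ i) (hpos : 0 < μ.card)
    (T' : {c // c ∈ (eraseYD μ i h).cells} ≃ Fin (eraseYD μ i h).card) :
    restrictT h hpos (extendT h hpos T') (extendT_max h hpos T') = T' := by
  apply Equiv.ext
  intro d
  have hd : (d : ℕ × ℕ) ≠ corner μ i := by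
    have := (mem_eraseYD (h := h)).mp (((eraseYD μ i h).mem_cells _).mp d.2)
    exact this.2
  have hdm : (d : ℕ × ℕ) ∈ μ.cells := by
    have := (mem_eraseYD (h := h)).mp (((eraseYD μ i h).mem_cells _).mp d.2)
    exact (μ.mem_cells _).mpr this.1
  apply Fin.ext
  rw [restrictT_apply_val h hpos _ _ d hdm,
    extendT_apply_ne h hpos T' ⟨(d : ℕ × ℕ), hdm⟩ hd d.2]

end YD

namespace YD

variable {μ : YoungDiagram}

lemma fiber_card (hpos : 0 < μ.card) {i : ℕ} (h : Removable μ i) :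
    (Finset.univ.filter (fun T : {c // c ∈ μ.cells} ≃ Fin μ.card => IsSYT μ T ∧
      ((T.symm ⟨μ.card - 1, Nat.sub_lt hpos one_pos⟩ : {c // c ∈ μ.cells}) : ℕ × ℕ) =
        corner μ i)).card = fSYT (eraseYD μ i h) := by
  rw [fSYT_eq]
  refine Finset.card_bij'
    (fun T hT => restrictT h hpos T (by
      simp only [Finset.mem_filter] at hT
      exact hT.2.2))
    (fun T' _ => extendT h hpos T') ?_ ?_ ?_ ?_
  · intro T hT
    simp only [Finset.mem_filter] at hT ⊢
    exact ⟨Finset.mem_univ _, restrictT_SYT h hpos T hT.2.2 hT.2.1⟩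
  · intro T' hT'
    simp only [Finset.mem_filter] at hT' ⊢
    exact ⟨Finset.mem_univ _, extendT_SYT h hpos T' hT'.2, extendT_max h hpos T'⟩
  · intro T hT
    exact extendT_restrictT h hpos T _
  · intro T' hT'
    exact restrictT_extendT h hpos T'

lemma fSYT_rec (hpos : 0 < μ.card) :
    fSYT μ = ∑ i ∈ Finset.range (μ.colLen 0),
      if h : Removable μ i then fSYT (eraseYD μ i h) else 0 := by
  rw [fSYT_eq]
  rw [Finset.card_eq_sum_card_fiberwise
    (f := fun T : {c // c ∈ μ.cells} ≃ Fin μ.card =>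
      ((T.symm ⟨μ.card - 1, Nat.sub_lt hpos one_pos⟩ : {c // c ∈ μ.cells}) : ℕ × ℕ).1)
    (t := Finset.range (μ.colLen 0))]
  · apply Finset.sum_congr rfl
    intro i _
    by_cases h : Removable μ i
    · rw [dif_pos h, ← fiber_card hpos h]
      congr 1
      rw [Finset.filter_filter]
      apply Finset.filter_congr
      intro T _
      constructor
      · rintro ⟨hT, hrow⟩
        refine ⟨hT, ?_⟩
        have := (maxcell hpos hT).2
        rw [this, hrow]
      · rintro ⟨hT, hcor⟩
        refine ⟨hT, ?_⟩
        rw [hcor]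
        rfl
    · rw [dif_neg h]
      rw [Finset.filter_filter, Finset.card_eq_zero, Finset.filter_eq_empty_iff]
      intro T _
      rintro ⟨hT, hrow⟩
      exact h (hrow ▸ (maxcell hpos hT).1)
  · intro T hT
    simp only [Finset.mem_coe, Finset.mem_filter] at hT ⊢
    have h1 := (maxcell hpos hT.2).1
    rw [Finset.mem_range, ← rowLen_pos_iff]
    unfold Removable at h1
    omega

end YD


namespace YD

lemma ExpDelta_eq_Ddet (ν : YoungDiagram) :
    ExpDelta ν = Ddet (ν.colLen 0) (fun j => (ν.rowLen (j : ℕ) : ℤ) - ((j : ℕ) : ℤ)) := rfl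

lemma Ddet_congr {r1 r2 : ℕ} (h : r1 = r2) (g : ℕ → ℤ) :
    Ddet r1 (fun j => g (j : ℕ)) = Ddet r2 (fun j => g (j : ℕ)) := by subst h; rfl

lemma fSYT_bot (μ : YoungDiagram) (hcard : μ.card = 0) : fSYT μ = 1 := by
  rw [fSYT_eq]
  have hempty : μ.cells = ∅ := Finset.card_eq_zero.mp hcard
  haveI h1 : IsEmpty {c // c ∈ μ.cells} := by
    constructor
    rintro ⟨c, hc⟩
    rw [hempty] at hc
    exact Finset.notMem_empty c hc
  haveI h2 : IsEmpty (Fin μ.card) := by rw [hcard]; exact Fin.isEmpty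
  rw [Finset.filter_true_of_mem]
  · rw [Finset.card_univ, Fintype.card_eq_one_iff]
    exact ⟨Equiv.equivOfIsEmpty _ _, fun T => Equiv.ext fun c => isEmptyElim c⟩
  · intro T _
    intro c
    exact isEmptyElim c

lemma colLen_bot (μ : YoungDiagram) (hcard : μ.card = 0) : μ.colLen 0 = 0 := by
  by_contra hc
  have : (0, 0) ∈ μ := YoungDiagram.mem_iff_lt_colLen.mpr (by omega)
  have h3 : μ.cells.Nonempty := ⟨(0, 0), (μ.mem_cells _).mpr this⟩
  have h4 : 0 < μ.card := Finset.card_pos.mpr h3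
  omega

lemma Ddet_congr' {r1 r2 : ℕ} (h : r1 = r2) (f1 : Fin r1 → ℤ) (f2 : Fin r2 → ℤ)
    (hf : ∀ k : Fin r1, f1 k = f2 ⟨(k : ℕ), h ▸ k.isLt⟩) : Ddet r1 f1 = Ddet r2 f2 := by
  subst h
  have : f1 = f2 := by
    funext k
    rw [hf k]
  rw [this]

lemma row_term (μ : YoungDiagram) (j : Fin (μ.colLen 0)) :
    Ddet (μ.colLen 0) (Function.update
        (fun k : Fin (μ.colLen 0) => (μ.rowLen (k : ℕ) : ℤ) - ((k : ℕ) : ℤ)) j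
        ((μ.rowLen (j : ℕ) : ℤ) - ((j : ℕ) : ℤ) - 1)) =
      if h : Removable μ (j : ℕ) then ExpDelta (eraseYD μ (j : ℕ) h) else 0 := by
  classical
  have hjpos : 0 < μ.rowLen (j : ℕ) := (rowLen_pos_iff μ _).mpr j.isLt
  by_cases h : Removable μ (j : ℕ)
  · rw [dif_pos h]
    set G : ℕ → ℤ := fun k =>
      if k = (j : ℕ) then (μ.rowLen (j : ℕ) : ℤ) - ((j : ℕ) : ℤ) - 1
      else (μ.rowLen k : ℤ) - (k : ℤ) with hG
    have hupd : (Function.update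
        (fun k : Fin (μ.colLen 0) => (μ.rowLen (k : ℕ) : ℤ) - ((k : ℕ) : ℤ)) j
        ((μ.rowLen (j : ℕ) : ℤ) - ((j : ℕ) : ℤ) - 1)) =
        fun k : Fin (μ.colLen 0) => G (k : ℕ) := by
      funext k
      rw [Function.update_apply]
      by_cases hk : k = j
      · rw [if_pos hk, hG]
        simp only [if_pos (congrArg Fin.val hk)]
      · have hkv : (k : ℕ) ≠ (j : ℕ) := fun hc => hk (Fin.ext hc)
        rw [if_neg hk, hG]
        simp only [if_neg hkv]
    rw [hupd, ExpDelta_eq_Ddet]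
    have hGval : ∀ k : ℕ, k ≠ (j : ℕ) →
        G k = ((eraseYD μ (j : ℕ) h).rowLen k : ℤ) - (k : ℤ) := by
      intro k hk
      rw [hG]
      simp only [if_neg hk]
      rw [rowLen_eraseYD_ne h hk]
    have hGj : G (j : ℕ) = ((eraseYD μ (j : ℕ) h).rowLen (j : ℕ) : ℤ) - ((j : ℕ) : ℤ) := by
      have h5 : G (j : ℕ) = (μ.rowLen (j : ℕ) : ℤ) - ((j : ℕ) : ℤ) - 1 := by
        rw [hG]
        exact if_pos rfl
      rw [h5, rowLen_eraseYD_self h]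
      omega
    by_cases h2 : 2 ≤ μ.rowLen (j : ℕ)
    · have hcol := colLen_eraseYD_of_two_le h h2
      refine Ddet_congr' hcol.symm _ _ ?_
      intro k
      by_cases hk : (k : ℕ) = (j : ℕ)
      · show G (k : ℕ) = _
        rw [hk, hGj]
      · show G (k : ℕ) = _
        rw [hGval _ hk]
    · have h1 : μ.rowLen (j : ℕ) = 1 := by omega
      have hcolμ : μ.colLen 0 = (j : ℕ) + 1 := last_row_of_rowLen_one h h1
      have hcol := colLen_eraseYD_of_one h h1
      have step1 : Ddet (μ.colLen 0) (fun k : Fin (μ.colLen 0) => G (k : ℕ)) =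
          Ddet ((j : ℕ) + 1) (fun k : Fin ((j : ℕ) + 1) => G (k : ℕ)) := by
        refine Ddet_congr' hcolμ _ _ ?_
        intro k
        rfl
      rw [step1]
      rw [Ddet_pad (j : ℕ) (fun k => G (k : ℕ)) (by
        simp only [Fin.val_last, hG, if_pos rfl, h1]
        push_cast
        ring)]
      refine Ddet_congr' hcol.symm _ _ ?_
      intro k
      have hkv : (k : ℕ) ≠ (j : ℕ) := by have := k.isLt; omega
      show G ((Fin.castSucc k : Fin ((j : ℕ) + 1)) : ℕ) = _
      rw [Fin.coe_castSucc, hGval _ hkv]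
  · rw [dif_neg h]
    have heq : μ.rowLen ((j : ℕ) + 1) = μ.rowLen (j : ℕ) := by
      have hanti := μ.rowLen_anti (j : ℕ) ((j : ℕ) + 1) (Nat.le_succ _)
      unfold Removable at h
      omega
    have hlt : (j : ℕ) + 1 < μ.colLen 0 := by
      rw [← rowLen_pos_iff]
      omega
    apply Ddet_zero_of_eq _ _ j ⟨(j : ℕ) + 1, hlt⟩
    · intro hc
      have := congrArg Fin.val hc
      simp at this
    · rw [Function.update_self, Function.update_of_ne (by
        intro hc
        have := congrArg Fin.val hc
        simp at this)]
      simp only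
      rw [heq]
      push_cast
      ring

end YD

namespace YD

theorem main_aux (n : ℕ) : ∀ μ : YoungDiagram, μ.card = n →
    (fSYT μ : ℚ) = (Nat.factorial n : ℚ) * ExpDelta μ := by
  induction n with
  | zero =>
    intro μ hcard
    rw [fSYT_bot μ hcard, Nat.factorial_zero, ExpDelta_eq_Ddet]
    have hcol := colLen_bot μ hcard
    have h1 : Ddet (μ.colLen 0) (fun j => (μ.rowLen (j : ℕ) : ℤ) - ((j : ℕ) : ℤ)) =
        Ddet 0 (fun _ => (0 : ℤ)) := by
      refine Ddet_congr' hcol _ _ ?_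
      intro k
      exact absurd k.isLt (by omega)
    rw [h1]
    have h2 : Ddet 0 (fun _ => (0 : ℤ)) = 1 := Matrix.det_isEmpty
    rw [h2]
    norm_num
  | succ n ih =>
    intro μ hcard
    have hpos : 0 < μ.card := by omega
    set a : Fin (μ.colLen 0) → ℤ :=
      fun k => (μ.rowLen (k : ℕ) : ℤ) - ((k : ℕ) : ℤ) with ha
    -- the sum identity
    have hsumZ : (∑ j : Fin (μ.colLen 0), a j) + (∑ j : Fin (μ.colLen 0), ((j : ℕ) : ℤ)) =
        ((n : ℤ) + 1) := by
      rw [ha]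
      rw [Finset.sum_sub_distrib, sub_add_cancel]
      have e2 : ∑ j : Fin (μ.colLen 0), (μ.rowLen (j : ℕ) : ℤ) = (μ.card : ℤ) := by
        rw [card_eq_sum μ]
        push_cast
        rfl
      rw [e2, hcard]
      push_cast
      ring
    have hkey := Ddet_key (μ.colLen 0) a
    have hcast : ((∑ j : Fin (μ.colLen 0), a j : ℤ) : ℚ) +
        ((∑ j : Fin (μ.colLen 0), ((j : ℕ) : ℤ) : ℤ) : ℚ) = (n : ℚ) + 1 := by
      exact_mod_cast congrArg (fun z : ℤ => (z : ℚ)) hsumZ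
    have hkey2 : ∑ j : Fin (μ.colLen 0), Ddet (μ.colLen 0) (Function.update a j (a j - 1)) =
        ((n : ℚ) + 1) * Ddet (μ.colLen 0) a := by
      rw [hkey, hcast]
    -- each term
    have hterm : ∀ j : Fin (μ.colLen 0),
        (Nat.factorial n : ℚ) * Ddet (μ.colLen 0) (Function.update a j (a j - 1)) =
        ((if h : Removable μ (j : ℕ) then fSYT (eraseYD μ (j : ℕ) h) else 0 : ℕ) : ℚ) := by
      intro j
      have hup : Function.update a j (a j - 1) = Function.update a j
          ((μ.rowLen (j : ℕ) : ℤ) - ((j : ℕ) : ℤ) - 1) := by rw [ha]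
      rw [hup, row_term μ j]
      by_cases h : Removable μ (j : ℕ)
      · rw [dif_pos h, dif_pos h]
        have hc : (eraseYD μ (j : ℕ) h).card = n := by
          rw [card_eraseYD h, hcard]
          omega
        rw [← ih _ hc]
      · rw [dif_neg h, dif_neg h]
        norm_num
    rw [fSYT_rec hpos, ExpDelta_eq_Ddet, ← ha]
    rw [Nat.cast_sum]
    rw [← Fin.sum_univ_eq_sum_range
      (fun m => ((if h : Removable μ m then fSYT (eraseYD μ m h) else 0 : ℕ) : ℚ))
      (μ.colLen 0)]
    rw [Finset.sum_congr rfl (fun j _ => (hterm j).symm), ← Finset.mul_sum, hkey2,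
      Nat.factorial_succ]
    push_cast
    ring

end YD


theorem stmt1 (μ : YoungDiagram) :
    (fSYT μ : ℚ) = (Nat.factorial μ.card : ℚ) * ExpDelta μ := by
  exact YD.main_aux μ.card μ rfl
end

section
/- For any partition λ, the product of the hook lengths of all boxes in the Young diagram of λ equals the reciprocal of the Schur determinant Δ_λ(exp(t)) = det(1/(λⱼ - j + i)!)_{1≤i,j≤r}; equivalently, Δ_λ(exp(t)) · ∏_{x ∈ Y(λ)} h(x) = 1. -/
open MvPolynomial
open scoped Classical

namespace HK
open Finset

/-- delete the top row of a Young diagram -/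
def tail (μ : YoungDiagram) : YoungDiagram where
  cells := (μ.cells.filter (fun c => c.1 ≠ 0)).image (fun c => (c.1 - 1, c.2))
  isLowerSet := by
    rintro ⟨a1, a2⟩ ⟨b1, b2⟩ ⟨h1, h2⟩ hb
    simp only at h1 h2
    simp only [Finset.coe_image, Finset.coe_filter, Set.mem_image, Set.mem_setOf_eq,
      Finset.mem_coe, YoungDiagram.mem_cells] at hb ⊢
    obtain ⟨⟨c1, c2⟩, ⟨hc, hc0⟩, heq⟩ := hb
    simp only [Prod.mk.injEq] at heq h1 h2
    refine ⟨(b1 + 1, b2), ⟨μ.up_left_mem (by omega) (by omega) hc, by omega⟩, by simp⟩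

lemma mem_tail (μ : YoungDiagram) (i j : ℕ) : (i, j) ∈ tail μ ↔ (i + 1, j) ∈ μ := by
  rw [← YoungDiagram.mem_cells]
  show (i, j) ∈ (μ.cells.filter _).image _ ↔ _
  simp only [Finset.mem_image, Finset.mem_filter, YoungDiagram.mem_cells, Prod.mk.injEq]
  constructor
  · rintro ⟨⟨c1, c2⟩, ⟨hc, hc0⟩, h1, h2⟩
    simp only at hc0 h1 h2
    have : c1 = i + 1 := by omega
    subst this; subst h2; exact hc
  · intro h
    exact ⟨(i + 1, j), ⟨h, by simp⟩, by simp, rfl⟩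

lemma tail_rowLen (μ : YoungDiagram) (i : ℕ) : (tail μ).rowLen i = μ.rowLen (i + 1) := by
  refine eq_of_forall_lt_iff fun t => ?_
  rw [← YoungDiagram.mem_iff_lt_rowLen, ← YoungDiagram.mem_iff_lt_rowLen, mem_tail]

lemma tail_colLen (μ : YoungDiagram) (j : ℕ) : (tail μ).colLen j = μ.colLen j - 1 := by
  refine eq_of_forall_lt_iff fun t => ?_
  rw [← YoungDiagram.mem_iff_lt_colLen, mem_tail, YoungDiagram.mem_iff_lt_colLen]
  omega

lemma hook_tail (μ : YoungDiagram) (c : ℕ × ℕ) :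
    hookLen (tail μ) c = hookLen μ (c.1 + 1, c.2) := by
  obtain ⟨i, j⟩ := c
  simp only [hookLen, tail_rowLen, tail_colLen]
  have : 0 < μ.colLen 0 → True := fun _ => trivial
  omega

/-- the first-column hook value -/
def mv (μ : YoungDiagram) (j : ℕ) : ℕ := μ.rowLen j + (μ.colLen 0 - 1 - j)

lemma mv_tail (μ : YoungDiagram) (j : ℕ) : mv (tail μ) j = mv μ (j + 1) := by
  simp only [mv, tail_rowLen, tail_colLen]
  omega

lemma mv_strict (μ : YoungDiagram) {i j : ℕ} (hj : j < μ.colLen 0) (hij : i < j) :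
    mv μ j < mv μ i := by
  have := μ.rowLen_anti i j (le_of_lt hij)
  simp only [mv]
  omega
lemma row0 (μ : YoungDiagram) (hr : 0 < μ.colLen 0) :
    (∏ j ∈ range (μ.rowLen 0), hookLen μ (0, j)) *
      ∏ k ∈ Ico 1 (μ.colLen 0), (mv μ 0 - mv μ k) = Nat.factorial (mv μ 0) := by
  have hn : 0 < μ.rowLen 0 := by
    rw [← YoungDiagram.mem_iff_lt_rowLen, YoungDiagram.mem_iff_lt_colLen]; exact hr
  set r := μ.colLen 0 with hrdef
  set n := μ.rowLen 0 with hndef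
  set M := mv μ 0 with hMdef
  have hMval : M = n + (r - 1) := by
    simp only [hMdef, mv, ← hndef, ← hrdef]; omega
  have hcpos : ∀ j, j < n → 0 < μ.colLen j := fun j hj => by
    rw [← YoungDiagram.mem_iff_lt_colLen, YoungDiagram.mem_iff_lt_rowLen]; exact hj
  have hcle : ∀ j, μ.colLen j ≤ r := fun j => μ.colLen_anti 0 j (Nat.zero_le _)
  have hkey : ∀ k j : ℕ, k < μ.colLen j ↔ j < μ.rowLen k := fun k j => by
    rw [← YoungDiagram.mem_iff_lt_colLen, YoungDiagram.mem_iff_lt_rowLen]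
  have hlamle : ∀ k, μ.rowLen k ≤ n := fun k => μ.rowLen_anti 0 k (Nat.zero_le _)
  set a : ℕ → ℕ := fun j => μ.rowLen 0 - j + (μ.colLen j - 0) - 1 with hadef
  set b : ℕ → ℕ := fun k => mv μ 0 - mv μ k with hbdef
  have hhook : ∀ j, hookLen μ (0, j) = a j := fun j => rfl
  have hbval : ∀ k, 1 ≤ k → k < r → b k = n + k - μ.rowLen k := by
    intro k h1 h2
    have := hlamle k
    simp only [hbdef, mv, ← hndef, ← hrdef]
    omega
  have haMono : ∀ j1 j2, j1 < j2 → j2 < n → a j2 < a j1 := by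
    intro j1 j2 h hn2
    have h1 := μ.colLen_anti j1 j2 h.le
    have h2 := hcpos j2 hn2
    simp only [hadef, ← hndef]
    omega
  have hbMono : ∀ k1 k2, 1 ≤ k1 → k1 < k2 → k2 < r → b k1 < b k2 := by
    intro k1 k2 h1 h2 h3
    have := μ.rowLen_anti k1 k2 h2.le
    have := hlamle k1
    rw [hbval k1 h1 (h2.trans h3), hbval k2 (h1.trans h2.le) h3]
    omega
  have haInj : ∀ j1 ∈ range n, ∀ j2 ∈ range n, a j1 = a j2 → j1 = j2 := by
    intro j1 h1 j2 h2 he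
    simp only [mem_range] at h1 h2
    rcases lt_trichotomy j1 j2 with h | h | h
    · exact absurd he (haMono j1 j2 h h2).ne'
    · exact h
    · exact absurd he (haMono j2 j1 h h1).ne
  have hbInj : ∀ k1 ∈ Ico 1 r, ∀ k2 ∈ Ico 1 r, b k1 = b k2 → k1 = k2 := by
    intro k1 h1 k2 h2 he
    simp only [mem_Ico] at h1 h2
    rcases lt_trichotomy k1 k2 with h | h | h
    · exact absurd he (hbMono k1 k2 h1.1 h h2.2).ne
    · exact h
    · exact absurd he (hbMono k2 k1 h2.1 h h1.2).ne'
  have hdisj : ∀ j, j < n → ∀ k, 1 ≤ k → k < r → a j ≠ b k := by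
    intro j hj k hk1 hk2 he
    rw [hbval k hk1 hk2] at he
    have h3 := hlamle k
    have h4 := hcpos j hj
    have h5 := hcle j
    by_cases hcase : j < μ.rowLen k
    · have h6 : k < μ.colLen j := (hkey k j).mpr hcase
      simp only [hadef, ← hndef] at he
      omega
    · have h6 : ¬ k < μ.colLen j := fun hh => hcase ((hkey k j).mp hh)
      simp only [hadef, ← hndef] at he
      omega
  have haRange : ∀ j, j < n → a j ∈ Icc 1 M := by
    intro j hj
    have := hcpos j hj
    have := hcle j
    simp only [mem_Icc, hadef, ← hndef]
    omega
  have hbRange : ∀ k, 1 ≤ k → k < r → b k ∈ Icc 1 M := by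
    intro k h1 h2
    rw [hbval k h1 h2]
    have := hlamle k
    have h7 : 0 < μ.rowLen k := by
      rw [← YoungDiagram.mem_iff_lt_rowLen, YoungDiagram.mem_iff_lt_colLen]; exact h2
    simp only [mem_Icc]
    omega
  set A := (range n).image a with hA
  set B := (Ico 1 r).image b with hB
  have hdisjAB : Disjoint A B := by
    rw [Finset.disjoint_left]
    rintro x hx hxB
    simp only [hA, hB, mem_image, mem_range, mem_Ico] at hx hxB
    obtain ⟨j, hj, rfl⟩ := hx
    obtain ⟨k, ⟨hk1, hk2⟩, he⟩ := hxB
    exact hdisj j hj k hk1 hk2 he.symm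
  have hcardA : A.card = n := by
    rw [hA, Finset.card_image_of_injOn fun x hx y hy => haInj x hx y hy, card_range]
  have hcardB : B.card = r - 1 := by
    rw [hB, Finset.card_image_of_injOn fun x hx y hy => hbInj x hx y hy, Nat.card_Ico]
  have hsub : A ∪ B ⊆ Icc 1 M := by
    intro x hx
    rcases Finset.mem_union.mp hx with hx | hx
    · simp only [hA, mem_image, mem_range] at hx
      obtain ⟨j, hj, rfl⟩ := hx; exact haRange j hj
    · simp only [hB, mem_image, mem_Ico] at hx
      obtain ⟨k, ⟨h1, h2⟩, rfl⟩ := hx; exact hbRange k h1 h2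
  have hEq : A ∪ B = Icc 1 M := by
    apply Finset.eq_of_subset_of_card_le hsub
    rw [Finset.card_union_of_disjoint hdisjAB, hcardA, hcardB, Nat.card_Icc]
    omega
  have hprodIcc : ∏ x ∈ Icc 1 M, x = Nat.factorial M := by
    rw [← Finset.Ico_add_one_right_eq_Icc, Finset.prod_Ico_eq_prod_range,
      ← Finset.prod_range_add_one_eq_factorial]
    exact Finset.prod_congr (by rw [Nat.add_sub_cancel]) (fun t _ => by omega)
  calc (∏ j ∈ range n, hookLen μ (0, j)) * ∏ k ∈ Ico 1 r, (mv μ 0 - mv μ k)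
      = (∏ j ∈ range n, a j) * ∏ k ∈ Ico 1 r, b k := by
        rw [Finset.prod_congr rfl fun j _ => hhook j]
    _ = (∏ x ∈ A, x) * ∏ x ∈ B, x := by
        rw [hA, hB, Finset.prod_image haInj, Finset.prod_image hbInj]
    _ = ∏ x ∈ A ∪ B, x := (Finset.prod_union hdisjAB).symm
    _ = Nat.factorial M := by rw [hEq, hprodIcc]

/-- the set of ordered pairs `i < j` in `range r` -/
def Pairs (r : ℕ) : Finset (ℕ × ℕ) :=
  (range r ×ˢ range r).filter (fun p : ℕ × ℕ => p.1 < p.2)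

lemma mem_Pairs {r : ℕ} {p : ℕ × ℕ} : p ∈ Pairs r ↔ p.1 < p.2 ∧ p.2 < r := by
  obtain ⟨i, j⟩ := p
  simp only [Pairs, mem_filter, mem_product, mem_range]
  omega

lemma pairs_succ (N : ℕ) : Pairs (N + 1) =
    ((Ico 1 (N + 1)).image fun k => ((0 : ℕ), k)) ∪
      ((Pairs N).image fun p : ℕ × ℕ => (p.1 + 1, p.2 + 1)) := by
  ext ⟨i, j⟩
  simp only [mem_Pairs, Finset.mem_union, mem_image, mem_Ico, Prod.mk.injEq]
  constructor
  · rintro ⟨h1, h2⟩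
    rcases Nat.eq_zero_or_pos i with hi | hi
    · exact Or.inl ⟨j, by omega, hi.symm, rfl⟩
    · refine Or.inr ⟨(i - 1, j - 1), ?_, by omega, by omega⟩
      dsimp only; omega
  · rintro (⟨k, hk, hi, hj⟩ | ⟨⟨p1, p2⟩, hp, hi, hj⟩)
    · omega
    · dsimp only at hp hi hj; omega

lemma prod_pairs_succ {M : Type*} [CommMonoid M] (f : ℕ × ℕ → M) (N : ℕ) :
    ∏ p ∈ Pairs (N + 1), f p =
      (∏ k ∈ Ico 1 (N + 1), f (0, k)) * ∏ p ∈ Pairs N, f (p.1 + 1, p.2 + 1) := by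
  rw [pairs_succ, Finset.prod_union, Finset.prod_image, Finset.prod_image]
  · intro p hp q hq he
    simp only [Prod.mk.injEq] at he
    obtain ⟨p1, p2⟩ := p; obtain ⟨q1, q2⟩ := q
    simp only at he
    simp only [Prod.mk.injEq]
    omega
  · intro p hp q hq he
    simp only [Prod.mk.injEq] at he
    omega
  · rw [Finset.disjoint_left]
    rintro ⟨x1, x2⟩ hx hx'
    simp only [mem_image, mem_Ico, Prod.mk.injEq] at hx hx'
    obtain ⟨k, hk, he0, hek⟩ := hx
    obtain ⟨⟨p1, p2⟩, hp, he1, he2⟩ := hx'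
    dsimp only at he1 he2
    omega

lemma cells_decomp (μ : YoungDiagram) : μ.cells =
    ((range (μ.rowLen 0)).image fun j => ((0 : ℕ), j)) ∪
      ((tail μ).cells.image fun c : ℕ × ℕ => (c.1 + 1, c.2)) := by
  ext ⟨i, j⟩
  simp only [YoungDiagram.mem_cells, Finset.mem_union, mem_image, mem_range, Prod.mk.injEq]
  constructor
  · intro h
    rcases Nat.eq_zero_or_pos i with hi | hi
    · subst hi
      exact Or.inl ⟨j, YoungDiagram.mem_iff_lt_rowLen.mp h, rfl, rfl⟩
    · refine Or.inr ⟨(i - 1, j), ?_, by omega, rfl⟩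
      rw [mem_tail]
      have : i - 1 + 1 = i := by omega
      rw [this]; exact h
  · rintro (⟨k, hk, hi, hj⟩ | ⟨⟨c1, c2⟩, hc, hi, hj⟩)
    · subst hj; rw [← hi, YoungDiagram.mem_iff_lt_rowLen]; exact hk
    · rw [mem_tail] at hc
      simp only at hi hj
      subst hi; subst hj; exact hc

lemma prod_cells {M : Type*} [CommMonoid M] (μ : YoungDiagram) (g : ℕ × ℕ → M) :
    ∏ c ∈ μ.cells, g c =
      (∏ j ∈ range (μ.rowLen 0), g (0, j)) * ∏ c ∈ (tail μ).cells, g (c.1 + 1, c.2) := by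
  rw [cells_decomp μ, Finset.prod_union, Finset.prod_image, Finset.prod_image]
  · intro p hp q hq he
    obtain ⟨p1, p2⟩ := p; obtain ⟨q1, q2⟩ := q
    simp only [Prod.mk.injEq] at he ⊢
    omega
  · intro p hp q hq he
    simp only [Prod.mk.injEq] at he
    exact he.2
  · rw [Finset.disjoint_left]
    rintro ⟨x1, x2⟩ hx hx'
    simp only [mem_image, mem_range, Prod.mk.injEq] at hx hx'
    obtain ⟨k, hk, he0, hek⟩ := hx
    obtain ⟨⟨p1, p2⟩, hp, he1, he2⟩ := hx'
    dsimp only at he1 he2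
    omega

lemma hookKey : ∀ (N : ℕ) (μ : YoungDiagram), μ.colLen 0 = N →
    (∏ c ∈ μ.cells, hookLen μ c) * ∏ p ∈ Pairs N, (mv μ p.1 - mv μ p.2)
      = ∏ j ∈ range N, Nat.factorial (mv μ j) := by
  intro N
  induction N with
  | zero =>
    intro μ h0
    have hc : μ.cells = ∅ := by
      apply Finset.eq_empty_of_forall_notMem
      rintro ⟨i, j⟩ hij
      rw [YoungDiagram.mem_cells] at hij
      have h1 : (i, 0) ∈ μ := μ.up_left_mem le_rfl (Nat.zero_le _) hij
      rw [YoungDiagram.mem_iff_lt_colLen, h0] at h1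
      omega
    have hP : Pairs 0 = ∅ := by
      apply Finset.eq_empty_of_forall_notMem
      intro p hp
      rw [mem_Pairs] at hp
      omega
    simp [hc, hP]
  | succ N ih =>
    intro μ hN
    have hr : 0 < μ.colLen 0 := by omega
    have htcol : (tail μ).colLen 0 = N := by rw [tail_colLen]; omega
    have hcells := prod_cells μ (fun c => hookLen μ c)
    have h2 : ∏ c ∈ (tail μ).cells, hookLen μ (c.1 + 1, c.2)
        = ∏ c ∈ (tail μ).cells, hookLen (tail μ) c :=
      Finset.prod_congr rfl fun c _ => (hook_tail μ c).symm
    have hPP := prod_pairs_succ (fun p : ℕ × ℕ => mv μ p.1 - mv μ p.2) N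
    have h3 : ∏ p ∈ Pairs N, (mv μ (p.1 + 1) - mv μ (p.2 + 1))
        = ∏ p ∈ Pairs N, (mv (tail μ) p.1 - mv (tail μ) p.2) :=
      Finset.prod_congr rfl fun p _ => by rw [mv_tail, mv_tail]
    have hrow := row0 μ hr
    rw [hN] at hrow
    calc (∏ c ∈ μ.cells, hookLen μ c) * ∏ p ∈ Pairs (N + 1), (mv μ p.1 - mv μ p.2)
        = ((∏ j ∈ range (μ.rowLen 0), hookLen μ (0, j)) *
            ∏ c ∈ (tail μ).cells, hookLen (tail μ) c) *
          ((∏ k ∈ Ico 1 (N + 1), (mv μ 0 - mv μ k)) *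
            ∏ p ∈ Pairs N, (mv (tail μ) p.1 - mv (tail μ) p.2)) := by
          rw [hcells, h2, hPP, h3]
      _ = ((∏ j ∈ range (μ.rowLen 0), hookLen μ (0, j)) *
            ∏ k ∈ Ico 1 (N + 1), (mv μ 0 - mv μ k)) *
          ((∏ c ∈ (tail μ).cells, hookLen (tail μ) c) *
            ∏ p ∈ Pairs N, (mv (tail μ) p.1 - mv (tail μ) p.2)) := by ring
      _ = Nat.factorial (mv μ 0) * ∏ j ∈ range N, Nat.factorial (mv (tail μ) j) := by
          rw [hrow, ih (tail μ) htcol]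
      _ = ∏ j ∈ range (N + 1), Nat.factorial (mv μ j) := by
          rw [Finset.prod_range_succ']
          rw [Finset.prod_congr rfl fun j (_ : j ∈ range N) => by rw [mv_tail]]
          ring

lemma einv_eq (a k : ℕ) :
    einv ((a : ℤ) - (k : ℤ)) = (Nat.descFactorial a k : ℚ) / (Nat.factorial a : ℚ) := by
  rcases le_or_gt k a with h | h
  · have h0 : (0 : ℤ) ≤ (a : ℤ) - k := by omega
    rw [einv, if_pos h0]
    have ht : ((a : ℤ) - k).toNat = a - k := by omega
    rw [ht]
    have hfa : (Nat.factorial a : ℚ) ≠ 0 := Nat.cast_ne_zero.mpr (Nat.factorial_ne_zero a)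
    have hfk : (Nat.factorial (a - k) : ℚ) ≠ 0 := Nat.cast_ne_zero.mpr (Nat.factorial_ne_zero _)
    rw [eq_div_iff hfa, inv_mul_eq_div, div_eq_iff hfk]
    have hfact := Nat.factorial_mul_descFactorial h
    exact_mod_cast (by rw [mul_comm] at hfact; exact hfact.symm)
  · have h0 : ¬ (0 : ℤ) ≤ (a : ℤ) - k := by omega
    rw [einv, if_neg h0, Nat.descFactorial_eq_zero_iff_lt.mpr h, Nat.cast_zero, zero_div]

lemma fin_pairs_prod {M : Type*} [CommMonoid M] (r : ℕ) (g : ℕ → ℕ → M) :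
    (∏ i : Fin r, ∏ j ∈ Ioi i, g i j) = ∏ p ∈ Pairs r, g p.1 p.2 := by
  rw [Finset.prod_sigma']
  refine Finset.prod_bij' (fun x _ => ((x.1 : ℕ), (x.2 : ℕ)))
    (fun p hp => ⟨⟨p.1, ?_⟩, ⟨p.2, ?_⟩⟩) ?_ ?_ ?_ ?_ ?_
  · rw [mem_Pairs] at hp; omega
  · rw [mem_Pairs] at hp; exact hp.2
  · rintro ⟨x1, x2⟩ hx
    simp only [Finset.mem_sigma, Finset.mem_univ, Finset.mem_Ioi] at hx
    rw [mem_Pairs]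
    exact ⟨hx.2, x2.2⟩
  · rintro p hp
    simp only [Finset.mem_sigma, Finset.mem_univ, Finset.mem_Ioi, true_and]
    rw [mem_Pairs] at hp
    exact hp.1
  · rintro ⟨x1, x2⟩ hx; rfl
  · rintro p hp; rfl
  · rintro ⟨x1, x2⟩ hx; rfl

lemma pairs_rev_prod {M : Type*} [CommMonoid M] (r : ℕ) (g : ℕ → ℕ → M) :
    ∏ p ∈ Pairs r, g p.1 p.2 = ∏ p ∈ Pairs r, g (r - 1 - p.2) (r - 1 - p.1) := by
  refine Finset.prod_bij' (fun p _ => (r - 1 - p.2, r - 1 - p.1))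
    (fun p _ => (r - 1 - p.2, r - 1 - p.1)) ?_ ?_ ?_ ?_ ?_
  · rintro ⟨p1, p2⟩ hp
    rw [mem_Pairs] at hp ⊢
    dsimp only at hp ⊢
    omega
  · rintro ⟨p1, p2⟩ hp
    rw [mem_Pairs] at hp ⊢
    dsimp only at hp ⊢
    omega
  · rintro ⟨p1, p2⟩ hp
    rw [mem_Pairs] at hp
    dsimp only at hp ⊢
    simp only [Prod.mk.injEq]
    omega
  · rintro ⟨p1, p2⟩ hp
    rw [mem_Pairs] at hp
    dsimp only at hp ⊢
    simp only [Prod.mk.injEq]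
    omega
  · rintro ⟨p1, p2⟩ hp
    rw [mem_Pairs] at hp
    dsimp only at hp ⊢
    have e1 : r - 1 - (r - 1 - p1) = p1 := by omega
    have e2 : r - 1 - (r - 1 - p2) = p2 := by omega
    rw [e1, e2]

lemma detStep (μ : YoungDiagram) :
    ExpDelta μ = (∏ p ∈ Pairs (μ.colLen 0), ((mv μ p.1 : ℚ) - (mv μ p.2 : ℚ))) /
      ∏ j ∈ range (μ.colLen 0), (Nat.factorial (mv μ j) : ℚ) := by
  set r := μ.colLen 0 with hr
  have hentry : ∀ i j : Fin r, einv ((μ.rowLen j : ℤ) - (j : ℤ) + (i : ℤ))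
      = ((Nat.factorial (mv μ j) : ℚ))⁻¹ *
        (Nat.descFactorial (mv μ j) (r - 1 - (i : ℕ)) : ℚ) := by
    intro i j
    have hj := j.2
    have hi := i.2
    have harg : (μ.rowLen j : ℤ) - (j : ℤ) + (i : ℤ)
        = ((mv μ j : ℕ) : ℤ) - ((r - 1 - (i : ℕ) : ℕ) : ℤ) := by
      simp only [mv, ← hr]
      omega
    rw [harg, einv_eq, div_eq_inv_mul]
  have hstep1 : ExpDelta μ = (∏ j : Fin r, ((Nat.factorial (mv μ j) : ℚ))⁻¹) *
      Matrix.det (Matrix.of fun i j : Fin r =>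
        (Nat.descFactorial (mv μ j) (r - 1 - (i : ℕ)) : ℚ)) := by
    rw [ExpDelta]
    have : (Matrix.of fun i j : Fin r => einv ((μ.rowLen j : ℤ) - (j : ℤ) + (i : ℤ)))
        = Matrix.of (fun i j : Fin r => ((Nat.factorial (mv μ j) : ℚ))⁻¹ *
            (Nat.descFactorial (mv μ j) (r - 1 - (i : ℕ)) : ℚ)) := by
      ext i j
      exact hentry i j
    rw [this]
    exact Matrix.det_mul_row (fun j : Fin r => ((Nat.factorial (mv μ j) : ℚ))⁻¹)
      (Matrix.of fun i j : Fin r => (Nat.descFactorial (mv μ j) (r - 1 - (i : ℕ)) : ℚ))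
  set u : Fin r → ℚ := fun i => ((mv μ (Fin.rev i) : ℕ) : ℚ) with hu
  have hdetD : Matrix.det (Matrix.of fun i j : Fin r =>
      (Nat.descFactorial (mv μ j) (r - 1 - (i : ℕ)) : ℚ))
      = Matrix.det (Matrix.vandermonde u) := by
    have hE : (Matrix.of fun i j : Fin r =>
        (Nat.descFactorial (mv μ j) (r - 1 - (i : ℕ)) : ℚ))
        = (Matrix.transpose (Matrix.of fun i j : Fin r =>
            (descPochhammer ℚ (j : ℕ)).eval (u i))).submatrix Fin.revPerm Fin.revPerm := by
      ext i j
      simp only [Matrix.submatrix_apply, Matrix.transpose_apply, Matrix.of_apply]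
      have h1 : ((Fin.revPerm i : Fin r) : ℕ) = r - 1 - (i : ℕ) := by
        simp only [Fin.revPerm_apply, Fin.val_rev]
        omega
      have h2 : (Fin.rev (Fin.revPerm j) : ℕ) = (j : ℕ) := by
        simp [Fin.rev_rev]
      rw [hu]
      simp only [h2, h1]
      rw [descPochhammer_eval_eq_descFactorial]
    rw [hE, Matrix.det_submatrix_equiv_self, Matrix.det_transpose]
    exact (Matrix.det_eval_matrixOfPolynomials_eq_det_vandermonde u
      (fun i => descPochhammer ℚ (i : ℕ))
      (fun i => descPochhammer_natDegree ℚ (i : ℕ))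
      (fun i => monic_descPochhammer ℚ (i : ℕ))).symm
  have hvdm : Matrix.det (Matrix.vandermonde u)
      = ∏ p ∈ Pairs r, ((mv μ p.1 : ℚ) - (mv μ p.2 : ℚ)) := by
    rw [Matrix.det_vandermonde]
    have h1 : (∏ i : Fin r, ∏ j ∈ Ioi i, (u j - u i))
        = ∏ i : Fin r, ∏ j ∈ Ioi i,
            (((mv μ (r - ((j : ℕ) + 1)) : ℕ) : ℚ) - ((mv μ (r - ((i : ℕ) + 1)) : ℕ) : ℚ)) := by
      refine Finset.prod_congr rfl fun i _ => Finset.prod_congr rfl fun j _ => ?_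
      rw [hu]
      simp only [Fin.val_rev]
    rw [h1, fin_pairs_prod r (fun x y =>
      ((mv μ (r - (y + 1)) : ℕ) : ℚ) - ((mv μ (r - (x + 1)) : ℕ) : ℚ)),
      pairs_rev_prod r (fun x y =>
        ((mv μ (r - (y + 1)) : ℕ) : ℚ) - ((mv μ (r - (x + 1)) : ℕ) : ℚ))]
    refine Finset.prod_congr rfl fun p hp => ?_
    rw [mem_Pairs] at hp
    have e1 : r - (r - 1 - p.1 + 1) = p.1 := by omega
    have e2 : r - (r - 1 - p.2 + 1) = p.2 := by omega
    rw [e1, e2]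
  rw [hstep1, hdetD, hvdm, Finset.prod_inv_distrib,
    Fin.prod_univ_eq_prod_range (fun j => (Nat.factorial (mv μ j) : ℚ)) r, inv_mul_eq_div]

end HK

theorem stmt2 (μ : YoungDiagram) :
    ExpDelta μ * ∏ c ∈ μ.cells, (hookLen μ c : ℚ) = 1 := by
  have hN := HK.hookKey (μ.colLen 0) μ rfl
  have hQ : ((∏ c ∈ μ.cells, hookLen μ c : ℕ) : ℚ) *
      ((∏ p ∈ HK.Pairs (μ.colLen 0), (HK.mv μ p.1 - HK.mv μ p.2) : ℕ) : ℚ)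
      = ((∏ j ∈ Finset.range (μ.colLen 0), Nat.factorial (HK.mv μ j) : ℕ) : ℚ) := by
    exact_mod_cast congrArg (Nat.cast : ℕ → ℚ) hN
  rw [Nat.cast_prod, Nat.cast_prod, Nat.cast_prod] at hQ
  have h1 : ∀ p ∈ HK.Pairs (μ.colLen 0),
      ((HK.mv μ p.1 - HK.mv μ p.2 : ℕ) : ℚ) = (HK.mv μ p.1 : ℚ) - (HK.mv μ p.2 : ℚ) := by
    intro p hp
    rw [HK.mem_Pairs] at hp
    have := HK.mv_strict μ hp.2 hp.1
    rw [Nat.cast_sub this.le]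
  rw [Finset.prod_congr rfl h1] at hQ
  have hfactpos : (∏ j ∈ Finset.range (μ.colLen 0), (Nat.factorial (HK.mv μ j) : ℚ)) ≠ 0 := by
    rw [Finset.prod_ne_zero_iff]
    intro j _
    exact Nat.cast_ne_zero.mpr (Nat.factorial_ne_zero _)
  rw [HK.detStep μ, div_mul_eq_mul_div, div_eq_one_iff_eq hfactpos]
  rw [← hQ]
  ring
end

section
/- Dual Schubert derivation Pieri rule: with X^r(λ) and σ_+(z) as in the Schubert derivation setup, let σ_-(z) = Σ σ_{-i} zⁱ be the adjoint of σ_+(z) with respect to the inner product making (X^r(λ)) orthonormal. Then σ_{-i} X^r(λ) = Σ_μ X^r(μ), summed over partitions μ with |μ| = |λ| − i and λ₁ ≥ μ₁ ≥ λ₂ ≥ μ₂ ≥ ⋯ ≥ λ_r ≥ μ_r. -/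
open MvPolynomial
open scoped Classical

noncomputable section

abbrev EA := ExteriorAlgebra ℚ (Polynomial ℚ)
abbrev eι : Polynomial ℚ →ₗ[ℚ] EA := ExteriorAlgebra.ι ℚ

def genSet (N : ℕ) : Set EA :=
  {y | ∃ l : List (Polynomial ℚ), (∀ v ∈ l, v.natDegree ≤ N) ∧ y = (l.map eι).prod}

def AN (N : ℕ) : Submodule ℚ EA := Submodule.span ℚ (genSet N)

lemma genSet_mono {N M : ℕ} (h : N ≤ M) : genSet N ⊆ genSet M := by
  rintro x ⟨l, hl, rfl⟩
  exact ⟨l, fun v hv => le_trans (hl v hv) h, rfl⟩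

lemma AN_mono {N M : ℕ} (h : N ≤ M) : AN N ≤ AN M :=
  Submodule.span_mono (genSet_mono h)

lemma exists_AN (x : EA) : ∃ N, x ∈ AN N := by
  induction x using CliffordAlgebra.induction with
  | algebraMap r =>
      refine ⟨0, ?_⟩
      rw [Algebra.algebraMap_eq_smul_one]
      exact Submodule.smul_mem _ _ (Submodule.subset_span ⟨[], by simp, by simp⟩)
  | ι m =>
      exact ⟨m.natDegree, Submodule.subset_span ⟨[m], by simp, by simp⟩⟩
  | mul a b ha hb =>
      obtain ⟨N, hN⟩ := ha
      obtain ⟨M, hM⟩ := hb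
      refine ⟨max N M, ?_⟩
      have h1 : a * b ∈ AN N * AN M := Submodule.mul_mem_mul hN hM
      have h2 : AN N * AN M ≤ AN (max N M) := by
        rw [AN, AN, Submodule.span_mul_span]
        refine Submodule.span_le.2 ?_
        rintro x ⟨y, ⟨l, hl, rfl⟩, z, ⟨l', hl', rfl⟩, rfl⟩
        refine Submodule.subset_span ⟨l ++ l', ?_, by simp⟩
        intro v hv
        rcases List.mem_append.1 hv with h | h
        · exact le_trans (hl v h) (le_max_left _ _)
        · exact le_trans (hl' v h) (le_max_right _ _)
      exact h2 h1
  | add a b ha hb =>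
      obtain ⟨N, hN⟩ := ha
      obtain ⟨M, hM⟩ := hb
      exact ⟨max N M, Submodule.add_mem _ (AN_mono (le_max_left _ _) hN)
        (AN_mono (le_max_right _ _) hM)⟩

lemma contract_prod (d : Module.Dual ℚ (Polynomial ℚ)) (l : List (Polynomial ℚ))
    (h : ∀ v ∈ l, d v = 0) :
    CliffordAlgebra.contractRight ((l.map eι).prod) d = 0 := by
  induction l using List.reverseRecOn with
  | nil => simpa using CliffordAlgebra.contractRight_one (Q := (0 : QuadraticForm ℚ (Polynomial ℚ))) (d := d)
  | append_singleton l v ih =>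
      rw [List.map_append, List.prod_append, List.map_singleton, List.prod_singleton]
      rw [CliffordAlgebra.contractRight_mul_ι]
      rw [h v (by simp), ih (fun w hw => h w (by simp [hw]))]
      simp

lemma annihilator {x : EA} (h : ∀ u : Polynomial ℚ, x * eι u = 0) : x = 0 := by
  obtain ⟨N, hN⟩ := exists_AN x
  set d : Module.Dual ℚ (Polynomial ℚ) := Polynomial.lcoeff ℚ (N+1) with hd
  have hcontr : CliffordAlgebra.contractRight x d = 0 := by
    refine Submodule.span_induction ?_ ?_ ?_ ?_ hN
    · rintro y ⟨l, hl, rfl⟩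
      refine contract_prod d l ?_
      intro v hv
      simpa [hd] using Polynomial.coeff_eq_zero_of_natDegree_lt
        (lt_of_le_of_lt (hl v hv) (Nat.lt_succ_self N))
    · simp
    · intro a b _ _ ha hb; rw [map_add, LinearMap.add_apply, ha, hb, add_zero]
    · intro c a _ ha; rw [map_smul, LinearMap.smul_apply, ha, smul_zero]
  have h0 : (0 : EA) = CliffordAlgebra.contractRight (x * eι (Polynomial.X ^ (N+1))) d := by
    rw [h, map_zero]; rfl
  rw [CliffordAlgebra.contractRight_mul_ι, hcontr] at h0
  have hdX : d (Polynomial.X ^ (N+1)) = 1 := by simp [hd, Polynomial.coeff_X_pow]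
  rw [hdX] at h0
  simpa using h0.symm



section Sigma
variable (σ : ℕ → Module.End ℚ EA)
    (hHS : ∀ (j : ℕ) (a b : EA),
      σ j (a * b) = ∑ i ∈ Finset.range (j+1), σ i a * σ (j - i) b)
    (hgen : ∀ (i : ℕ) (u : Polynomial ℚ), σ i (eι u) = eι (Polynomial.X ^ i * u))

include hHS hgen

lemma sigma_one_mul (i : ℕ) :
    ∀ u : Polynomial ℚ, σ i (1 : EA) * eι u = if i = 0 then eι u else 0 := by
  induction i using Nat.strong_induction_on with
  | _ i ih =>
    intro u
    have h := hHS i 1 (eι u)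
    rw [one_mul, hgen] at h
    rcases Nat.eq_zero_or_pos i with rfl | hi
    · have h0 : σ 0 (eι u) = eι u := by simpa using hgen 0 u
      simp only [zero_add, Finset.sum_range_one, Nat.sub_zero, h0, pow_zero, one_mul] at h
      simp [← h]
    · -- i ≥ 1
      rw [Finset.sum_range_succ] at h
      -- last term: σ i 1 * σ 0 (ι u)
      have hlast : σ 0 (eι u) = eι u := by simpa using hgen 0 u
      rw [Nat.sub_self, hlast] at h
      have hrest : ∑ k ∈ Finset.range i, σ k (1:EA) * σ (i - k) (eι u)
          = eι (Polynomial.X ^ i * u) := by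
        have h0 : ∀ k ∈ Finset.range i, σ k (1:EA) * σ (i - k) (eι u)
            = if k = 0 then eι (Polynomial.X ^ i * u) else 0 := by
          intro k hk
          rw [Finset.mem_range] at hk
          rw [hgen, ih k hk]
          rcases eq_or_ne k 0 with rfl | hk0
          · simp
          · simp [hk0]
        rw [Finset.sum_congr rfl h0, Finset.sum_ite_eq' (Finset.range i) 0]
        simp [hi]
      rw [hrest] at h
      have hz : eι (Polynomial.X ^ i * u) = eι (Polynomial.X ^ i * u) + σ i (1:EA) * eι u := h
      have : σ i (1:EA) * eι u = 0 := (left_eq_add.mp hz)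
      simp [Nat.pos_iff_ne_zero.mp hi, this]
lemma sigma_one (i : ℕ) : σ i (1 : EA) = if i = 0 then 1 else 0 := by
  have h := sigma_one_mul σ hHS hgen i
  rcases eq_or_ne i 0 with rfl | hi
  · have : ∀ u, (σ 0 (1:EA) - 1) * eι u = 0 := by
      intro u
      rw [sub_mul, one_mul]
      simp [h u]
    have h0 := annihilator this
    simp [sub_eq_zero.mp h0]
  · have : ∀ u, σ i (1:EA) * eι u = 0 := by
      intro u; simp [h u, hi]
    simp [annihilator this, hi]

/-- main expansion: σ j applied to a product of generators. -/
lemma sigma_prod : ∀ (r : ℕ) (j : ℕ) (v : Fin r → Polynomial ℚ),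
    σ j ((List.ofFn fun k => eι (v k)).prod)
      = ∑ c ∈ Finset.Nat.antidiagonalTuple r j,
          (List.ofFn fun k => eι (Polynomial.X ^ (c k) * v k)).prod := by
  intro r
  induction r with
  | zero =>
      intro j v
      rcases Nat.eq_zero_or_pos j with rfl | hj
      · simp [sigma_one σ hHS hgen, Finset.Nat.antidiagonalTuple_zero_zero]
      · obtain ⟨j', rfl⟩ := Nat.exists_eq_succ_of_ne_zero (Nat.pos_iff_ne_zero.mp hj)
        simp [sigma_one σ hHS hgen, Finset.Nat.antidiagonalTuple_zero_succ]
  | succ r ih =>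
      intro j v
      rw [List.ofFn_succ, List.prod_cons, hHS]
      have hterm : ∀ a ∈ Finset.range (j+1),
          σ a (eι (v 0)) * σ (j - a) ((List.ofFn fun k : Fin r => eι (v k.succ)).prod)
          = ∑ c ∈ Finset.Nat.antidiagonalTuple r (j - a),
              (List.ofFn fun k : Fin (r+1) =>
                 eι (Polynomial.X ^ (Fin.cons a c k) * v k)).prod := by
        intro a _
        rw [hgen, ih (j - a) (fun k => v k.succ), Finset.mul_sum]
        refine Finset.sum_congr rfl ?_
        intro c _
        rw [List.ofFn_succ, List.prod_cons]
        simp [Fin.cons_succ]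
      rw [Finset.sum_congr rfl hterm]
      -- now reindex
      rw [Finset.sum_sigma']
      refine (Finset.sum_bij' (fun p _ => Fin.cons p.1 p.2)
        (fun c _ => ⟨c 0, Fin.tail c⟩) ?_ ?_ ?_ ?_ ?_)
      · rintro ⟨a, c⟩ hp
        simp only [Finset.mem_sigma, Finset.mem_range, Finset.Nat.mem_antidiagonalTuple] at hp ⊢
        rw [Fin.sum_cons, hp.2]
        omega
      · intro c hc
        simp only [Finset.Nat.mem_antidiagonalTuple] at hc
        simp only [Finset.mem_sigma, Finset.mem_range, Finset.Nat.mem_antidiagonalTuple]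
        rw [Fin.sum_univ_succ] at hc
        refine ⟨by omega, ?_⟩
        simp only [Fin.tail]
        omega
      · rintro ⟨a, c⟩ _
        simp [Fin.tail_cons]
      · intro c _
        simp [Fin.cons_self_tail]
      · rintro ⟨a, c⟩ _
        rfl

end Sigma

def expo (r : ℕ) (μ : YoungDiagram) (k : Fin r) : ℕ := (r - 1 - (k:ℕ)) + μ.rowLen k

lemma rowLen_eq_zero_of_le {μ : YoungDiagram} {r k : ℕ} (h : μ.colLen 0 ≤ r) (hk : r ≤ k) :
    μ.rowLen k = 0 := by
  by_contra hpos
  have : (k, 0) ∈ μ := YoungDiagram.mem_iff_lt_rowLen.2 (Nat.pos_of_ne_zero hpos)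
  have := YoungDiagram.mem_iff_lt_colLen.1 this
  omega

lemma colLen_le_of_rowLen_le {μ : YoungDiagram} {r : ℕ}
    (h : ∀ k, r ≤ k → μ.rowLen k = 0) : μ.colLen 0 ≤ r := by
  by_contra hc
  have : (r, 0) ∈ μ := YoungDiagram.mem_iff_lt_colLen.2 (by omega)
  have := YoungDiagram.mem_iff_lt_rowLen.1 this
  have := h r le_rfl
  omega

lemma expo_strictAnti (r : ℕ) (μ : YoungDiagram) {k l : Fin r} (h : (k:ℕ) < l) :
    expo r μ l < expo r μ k := by
  have h1 : μ.rowLen l ≤ μ.rowLen k := μ.rowLen_anti k l h.le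
  have h2 : (l : ℕ) ≤ r - 1 := by omega
  unfold expo
  omega

lemma card_eq_sum_rowLen {μ : YoungDiagram} {r : ℕ} (h : μ.colLen 0 ≤ r) :
    μ.card = ∑ k : Fin r, μ.rowLen k := by
  have hcells : μ.cells = (Finset.range r).biUnion μ.row := by
    ext c
    simp only [YoungDiagram.mem_cells, Finset.mem_biUnion, Finset.mem_range]
    constructor
    · intro hc
      have h1 : (c.1, 0) ∈ μ := μ.up_left_mem le_rfl (Nat.zero_le _) (by simpa using hc)
      have h2 := YoungDiagram.mem_iff_lt_colLen.1 h1
      exact ⟨c.1, by omega, by simp [YoungDiagram.mem_row_iff, hc]⟩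
    · rintro ⟨i, _, hc⟩
      exact (YoungDiagram.mem_row_iff.1 hc).1
  rw [YoungDiagram.card, hcells, Finset.card_biUnion, ← Finset.sum_range (n := r)]
  · exact Finset.sum_congr rfl fun i _ => (μ.rowLen_eq_card (i := i)).symm
  · intro i _ j _ hij
    simp only [Finset.disjoint_left, YoungDiagram.mem_row_iff]
    rintro c ⟨_, rfl⟩ ⟨_, h2⟩
    exact hij h2

lemma sum_expo {μ : YoungDiagram} {r : ℕ} (h : μ.colLen 0 ≤ r) :
    ∑ k : Fin r, expo r μ k = (∑ k : Fin r, (r - 1 - (k:ℕ))) + μ.card := by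
  rw [card_eq_sum_rowLen h, ← Finset.sum_add_distrib]
  rfl

lemma expo_inj {μ ν : YoungDiagram} {r : ℕ} (hμ : μ.colLen 0 ≤ r) (hν : ν.colLen 0 ≤ r)
    (h : ∀ k : Fin r, expo r μ k = expo r ν k) : μ = ν := by
  have hrow : ∀ k, μ.rowLen k = ν.rowLen k := by
    intro k
    rcases lt_or_ge k r with hk | hk
    · have := h ⟨k, hk⟩
      unfold expo at this
      simp only at this
      omega
    · rw [rowLen_eq_zero_of_le hμ hk, rowLen_eq_zero_of_le hν hk]
  have : μ.cells = ν.cells := by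
    ext c
    simp only [YoungDiagram.mem_cells]
    rw [show c = (c.1, c.2) from rfl, YoungDiagram.mem_iff_lt_rowLen,
      YoungDiagram.mem_iff_lt_rowLen, hrow]
  exact YoungDiagram.ext this

section Dgm
variable {r : ℕ} {e : Fin r → ℕ} (he : ∀ k l : Fin r, (k:ℕ) < l → e l < e k)

lemma strictAnti_step (he : ∀ k l : Fin r, (k:ℕ) < l → e l < e k) :
    ∀ (n : ℕ) (k l : Fin r), (l:ℕ) = k + n → e l + n ≤ e k := by
  intro n
  induction n with
  | zero => intro k l hl; have : l = k := Fin.ext (by omega); simp [this]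
  | succ n ih =>
      intro k l hl
      have hk : (k:ℕ) + n < r := by have := l.2; omega
      have h1 := ih k ⟨k + n, hk⟩ rfl
      have h2 := he ⟨k + n, hk⟩ l (by simp [hl])
      omega

lemma e_ge (he : ∀ k l : Fin r, (k:ℕ) < l → e l < e k) (k : Fin r) :
    r - 1 - (k:ℕ) ≤ e k := by
  have hr : 0 < r := k.pos
  have hlast : (r - 1) < r := by omega
  have := strictAnti_step he ((r-1) - k) k ⟨r-1, hlast⟩ (by simp; omega)
  omega

lemma dgm_sorted (he : ∀ k l : Fin r, (k:ℕ) < l → e l < e k) :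
    (List.ofFn fun k : Fin r => e k - (r - 1 - (k:ℕ))).SortedGE := by
  rw [List.sortedGE_iff_pairwise, List.pairwise_ofFn]
  intro k l hkl
  have h1 := he k l hkl
  have h2 := e_ge he k
  have h3 := e_ge he l
  have h4 : (l:ℕ) ≤ r - 1 := by have := l.2; omega
  simp only [ge_iff_le]
  have := strictAnti_step he (l - k) k l (by omega)
  omega

def dgm (he : ∀ k l : Fin r, (k:ℕ) < l → e l < e k) : YoungDiagram :=
  YoungDiagram.ofRowLens _ (dgm_sorted he)

lemma dgm_colLen : (dgm he).colLen 0 ≤ r := by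
  refine colLen_le_of_rowLen_le ?_
  intro k hk
  by_contra hpos
  have hmem : ((k : ℕ), 0) ∈ dgm he := YoungDiagram.mem_iff_lt_rowLen.2 (Nat.pos_of_ne_zero hpos)
  rw [dgm, YoungDiagram.mem_ofRowLens] at hmem
  obtain ⟨hlt, -⟩ := hmem
  simp only [List.length_ofFn] at hlt
  omega

lemma dgm_rowLen (k : Fin r) : (dgm he).rowLen k = e k - (r - 1 - (k:ℕ)) := by
  have hlen : (k : ℕ) < (List.ofFn fun k : Fin r => e k - (r - 1 - (k:ℕ))).length := by
    simp [k.2]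
  have := YoungDiagram.rowLen_ofRowLens (hw := dgm_sorted he) ⟨k, hlen⟩
  simpa [dgm] using this

lemma expo_dgm (k : Fin r) : expo r (dgm he) k = e k := by
  rw [expo, dgm_rowLen he k]
  have := e_ge he k
  omega

lemma dgm_expo {μ : YoungDiagram} (hμ : μ.colLen 0 ≤ r)
    (he' : ∀ k l : Fin r, (k:ℕ) < l → expo r μ l < expo r μ k) :
    dgm he' = μ :=
  expo_inj (dgm_colLen he') hμ (fun k => expo_dgm he' k)

end Dgm

lemma Xw_eq_ιMulti (r : ℕ) (μ : YoungDiagram) :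
    Xw r μ = ExteriorAlgebra.ιMulti ℚ r (fun k : Fin r => Polynomial.X ^ (expo r μ k)) := by
  rw [ExteriorAlgebra.ιMulti_apply, Xw]
  rfl

lemma Xw_dgm {r : ℕ} {e : Fin r → ℕ} (he : ∀ k l : Fin r, (k:ℕ) < l → e l < e k) :
    ExteriorAlgebra.ιMulti ℚ r (fun k : Fin r => Polynomial.X ^ (e k)) = Xw r (dgm he) := by
  rw [Xw_eq_ιMulti]
  congr 1
  ext k
  rw [expo_dgm he k]

lemma nat_stair (r : ℕ) (U : ℕ → ℕ) (h1 : 0 < r → 1 ≤ U 0)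
    (h2 : ∀ j, j + 1 < r → U j < U (j+1)) (h3 : ∀ j, j < r → U j ≤ r) :
    ∀ j, j < r → U j = j + 1 := by
  have hf : ∀ j, j < r → j + 1 ≤ U j := by
    intro j
    induction j with
    | zero => intro hj; exact h1 hj
    | succ n ih =>
        intro hj
        have ha := h2 n hj
        have hb := ih (by omega)
        omega
  have hb : ∀ d j, j < r → r - 1 - j = d → U j ≤ j + 1 := by
    intro d
    induction d with
    | zero => intro j hj hd; have := h3 j hj; omega
    | succ n ih =>
        intro j hj hd
        have hj1 : j + 1 < r := by omega
        have := h2 j hj1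
        have := ih (j+1) (by omega) (by omega)
        omega
  intro j hj
  have := hf j hj
  have := hb (r - 1 - j) j hj rfl
  omega

section Det
variable {r : ℕ} (m β : Fin r → ℕ)

def ucard (k : Fin r) : ℕ := (Finset.univ.filter fun s : Fin r => β k ≤ m s).card

lemma initseg {S : Finset (Fin r)} (h : ∀ s t : Fin r, s ≤ t → t ∈ S → s ∈ S) (s : Fin r) :
    s ∈ S ↔ (s:ℕ) < S.card := by
  constructor
  · intro hs
    have hsub : Finset.Iic s ⊆ S := fun t ht => h t s (Finset.mem_Iic.1 ht) hs
    have := Finset.card_le_card hsub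
    rw [Fin.card_Iic] at this
    omega
  · intro hs
    by_contra hns
    have hsub : S ⊆ Finset.Iio s := by
      intro t ht
      refine Finset.mem_Iio.2 ?_
      by_contra hts
      exact hns (h s t (not_lt.1 hts) ht)
    have := Finset.card_le_card hsub
    rw [Fin.card_Iio] at this
    omega

variable (hm : ∀ k l : Fin r, (k:ℕ) < l → m l < m k)

lemma ucard_iff (hm : ∀ k l : Fin r, (k:ℕ) < l → m l < m k) (k : Fin r) (s : Fin r) :
    β k ≤ m s ↔ (s:ℕ) < ucard m β k := by
  have := initseg (S := Finset.univ.filter fun s : Fin r => β k ≤ m s)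
    (fun s t hst ht => by
      simp only [Finset.mem_filter, Finset.mem_univ, true_and] at ht ⊢
      rcases eq_or_lt_of_le hst with rfl | hlt
      · exact ht
      · exact le_trans ht (le_of_lt (hm s t hlt))) s
  simp only [Finset.mem_filter, Finset.mem_univ, true_and] at this
  exact this.trans (by rfl)

lemma ucard_le (k : Fin r) : ucard m β k ≤ r := by
  have := Finset.card_le_card (Finset.filter_subset (fun s : Fin r => β k ≤ m s) Finset.univ)
  simpa [ucard] using this

/-- the strip condition, expressed via `m`, `β` -/
def stripCond : Prop :=
  ∀ k : Fin r, β k ≤ m k ∧ ∀ h : (k:ℕ)+1 < r, m ⟨(k:ℕ)+1, h⟩ < β k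

lemma stripCond_iff_ucard (hm : ∀ k l : Fin r, (k:ℕ) < l → m l < m k) :
    stripCond m β ↔ ∀ k : Fin r, ucard m β k = (k:ℕ) + 1 := by
  constructor
  · intro h k
    obtain ⟨h1, h2⟩ := h k
    have hge : (k:ℕ) < ucard m β k := (ucard_iff m β hm k k).1 h1
    rcases Nat.lt_or_ge ((k:ℕ)+1) r with hk1 | hk1
    · have := (ucard_iff m β hm k ⟨(k:ℕ)+1, hk1⟩).not.1 (not_le.2 (h2 hk1))
      simp only [not_lt] at this
      omega
    · have := ucard_le m β k
      omega
  · intro h k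
    constructor
    · exact (ucard_iff m β hm k k).2 (by rw [h k]; omega)
    · intro hk1
      have := (ucard_iff m β hm k ⟨(k:ℕ)+1, hk1⟩).not.2 (by rw [h k]; simp)
      omega

lemma stair_sum (hm : ∀ k l : Fin r, (k:ℕ) < l → m l < m k)
    (hβ : ∀ k l : Fin r, (k:ℕ) < l → β l < β k) :
    ∑ w : Equiv.Perm (Fin r), ((Equiv.Perm.sign w : ℤ) : ℚ)
        * ∏ k : Fin r, (if β k ≤ m (w k) then (1:ℚ) else 0)
      = if stripCond m β then 1 else 0 := by
  set M : Matrix (Fin r) (Fin r) ℚ := Matrix.of fun s k => if β k ≤ m s then (1:ℚ) else 0 with hM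
  have hdet : ∑ w : Equiv.Perm (Fin r), ((Equiv.Perm.sign w : ℤ) : ℚ)
        * ∏ k : Fin r, (if β k ≤ m (w k) then (1:ℚ) else 0) = M.det := by
    rw [Matrix.det_apply']
    rfl
  rw [hdet]
  by_cases hs : stripCond m β
  · -- upper triangular with unit diagonal
    have hu := (stripCond_iff_ucard m β hm).1 hs
    have htri : M.BlockTriangular id := by
      intro s k hks
      simp only [id] at hks
      simp only [hM, Matrix.of_apply, ite_eq_right_iff]
      intro hle
      have := (ucard_iff m β hm k s).1 hle
      rw [hu k] at this
      exact absurd (by omega : (s:ℕ) < (k:ℕ) + 1) (by omega)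
    rw [Matrix.det_of_upperTriangular htri]
    rw [if_pos hs]
    refine Finset.prod_eq_one ?_
    intro k _
    simp only [hM, Matrix.of_apply, if_pos ((ucard_iff m β hm k k).2 (by rw [hu k]; omega))]
  · rw [if_neg hs]
    -- not all ucard k = k+1
    have hnot := (stripCond_iff_ucard m β hm).not.1 hs
    push_neg at hnot
    -- either a zero column or two equal adjacent columns
    by_cases hzero : ∃ k : Fin r, ucard m β k = 0
    · obtain ⟨k, hk⟩ := hzero
      refine Matrix.det_eq_zero_of_column_eq_zero k ?_
      intro s
      simp only [hM, Matrix.of_apply, ite_eq_right_iff]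
      intro hle
      have := (ucard_iff m β hm k s).1 hle
      omega
    · by_cases heq : ∃ (k l : Fin r), (l:ℕ) = (k:ℕ) + 1 ∧ ucard m β k = ucard m β l
      · obtain ⟨k, l, hkl, hul⟩ := heq
        refine Matrix.det_zero_of_column_eq (show k ≠ l by
          intro h; rw [h] at hkl; omega) ?_
        intro s
        simp only [hM, Matrix.of_apply]
        have e1 : (β k ≤ m s) ↔ (β l ≤ m s) := by
          rw [ucard_iff m β hm k s, ucard_iff m β hm l s, hul]
        simp only [e1]
      · exfalso
        push_neg at hzero heq
        -- derive ∀ k, ucard = k+1 via nat_stair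
        set U : ℕ → ℕ := fun j => if h : j < r then ucard m β ⟨j, h⟩ else 0 with hU
        have h1 : 0 < r → 1 ≤ U 0 := by
          intro hr
          simp only [hU, dif_pos hr]
          have := hzero ⟨0, hr⟩
          omega
        have hmono : ∀ (k l : Fin r), (k:ℕ) < (l:ℕ) → ucard m β k ≤ ucard m β l := by
          intro k l hkl
          refine Finset.card_le_card ?_
          intro s hs
          simp only [Finset.mem_filter, Finset.mem_univ, true_and] at hs ⊢
          exact le_trans (le_of_lt (hβ k l hkl)) hs
        have h2 : ∀ j, j + 1 < r → U j < U (j+1) := by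
          intro j hj
          simp only [hU, dif_pos hj, dif_pos (by omega : j < r)]
          have hle := hmono ⟨j, by omega⟩ ⟨j+1, hj⟩ (by simp)
          have hne := heq ⟨j, by omega⟩ ⟨j+1, hj⟩ (by simp)
          omega
        have h3 : ∀ j, j < r → U j ≤ r := by
          intro j hj
          simp only [hU, dif_pos hj]
          exact ucard_le m β _
        have := nat_stair r U h1 h2 h3
        obtain ⟨k, hk⟩ := hnot
        have := this k k.2
        simp only [hU, dif_pos k.2] at this
        exact hk (by simpa using this)

end Det

def sgn {r : ℕ} (w : Equiv.Perm (Fin r)) : ℚ := ((Equiv.Perm.sign w : ℤ) : ℚ)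

lemma sgn_mul_self {r : ℕ} (w : Equiv.Perm (Fin r)) : sgn w * sgn w = 1 := by
  unfold sgn
  rw [← Int.cast_mul, ← Units.val_mul, Int.units_mul_self]
  simp

lemma sign_smul_eq {r : ℕ} (w : Equiv.Perm (Fin r)) (x : EA) :
    Equiv.Perm.sign w • x = sgn w • x := by
  rw [Units.smul_def, ← Int.cast_smul_eq_zsmul ℚ]
  rfl

section Inner
variable (inner : EA →ₗ[ℚ] EA →ₗ[ℚ] ℚ)
  (horth : ∀ (r : ℕ) (μ ν : YoungDiagram), μ.colLen 0 ≤ r → ν.colLen 0 ≤ r →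
      inner (Xw r μ) (Xw r ν) = if μ = ν then 1 else 0)

include horth

lemma inner_W (r : ℕ) (μ : YoungDiagram) (hμ : μ.colLen 0 ≤ r) (e : Fin r → ℕ) :
    inner (Xw r μ) (ExteriorAlgebra.ιMulti ℚ r fun k => Polynomial.X ^ e k)
      = ∑ w : Equiv.Perm (Fin r), sgn w *
          (if ∀ k, e (w k) = expo r μ k then 1 else 0) := by
  by_cases hw0 : ∃ w : Equiv.Perm (Fin r), ∀ k, e (w k) = expo r μ k
  · obtain ⟨w₀, hw₀⟩ := hw0
    have hminj : Function.Injective (expo r μ) := by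
      intro k l hkl
      by_contra hne
      rcases Ne.lt_or_gt (fun h : (k:ℕ) = (l:ℕ) => hne (Fin.ext h)) with h | h
      · exact absurd hkl (ne_of_gt (expo_strictAnti r μ h))
      · exact absurd hkl (ne_of_lt (expo_strictAnti r μ h))
    have heinj : Function.Injective e := by
      have : e = (expo r μ) ∘ ⇑w₀.symm := by
        funext x
        have := hw₀ (w₀.symm x)
        simpa using this
      rw [this]
      exact hminj.comp w₀.symm.injective
    -- RHS = sgn w₀
    have hRHS : ∑ w : Equiv.Perm (Fin r), sgn w *
          (if ∀ k, e (w k) = expo r μ k then 1 else 0) = sgn w₀ := by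
      rw [Finset.sum_eq_single w₀]
      · rw [if_pos hw₀, mul_one]
      · intro w _ hne
        rw [if_neg, mul_zero]
        intro hcon
        refine hne (Equiv.ext ?_)
        intro k
        exact heinj ((hcon k).trans (hw₀ k).symm)
      · intro h; exact absurd (Finset.mem_univ w₀) h
    rw [hRHS]
    -- LHS
    have hperm : Xw r μ = Equiv.Perm.sign w₀ •
        ExteriorAlgebra.ιMulti ℚ r (fun k => Polynomial.X ^ e k) := by
      rw [Xw_eq_ιMulti]
      have : (fun k => Polynomial.X ^ expo r μ k)
          = (fun k : Fin r => (Polynomial.X : Polynomial ℚ) ^ e k) ∘ ⇑w₀ := by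
        funext k
        simp [hw₀ k]
      rw [this]
      exact AlternatingMap.map_perm _ _ _
    have h1 : inner (Xw r μ) (Xw r μ) = 1 := by rw [horth r μ μ hμ hμ, if_pos rfl]
    nth_rewrite 2 [hperm] at h1
    rw [sign_smul_eq, map_smul, smul_eq_mul] at h1
    have := sgn_mul_self w₀
    calc inner (Xw r μ) (ExteriorAlgebra.ιMulti ℚ r fun k => Polynomial.X ^ e k)
        = (sgn w₀ * sgn w₀) * inner (Xw r μ) (ExteriorAlgebra.ιMulti ℚ r fun k => Polynomial.X ^ e k) := by
          rw [sgn_mul_self, one_mul]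
      _ = sgn w₀ := by rw [mul_assoc, h1, mul_one]
  · -- no w: RHS = 0
    have hRHS : ∑ w : Equiv.Perm (Fin r), sgn w *
          (if ∀ k, e (w k) = expo r μ k then 1 else 0) = 0 := by
      refine Finset.sum_eq_zero ?_
      intro w _
      rw [if_neg, mul_zero]
      exact fun hc => hw0 ⟨w, hc⟩
    rw [hRHS]
    by_cases heinj : Function.Injective e
    · -- sort
      set w' : Equiv.Perm (Fin r) := (Fin.revPerm).trans (Tuple.sort e) with hw'
      have hsm : StrictMono (e ∘ ⇑(Tuple.sort e)) :=
        (Tuple.monotone_sort e).strictMono_of_injective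
          (heinj.comp (Tuple.sort e).injective)
      have hf : ∀ k l : Fin r, (k:ℕ) < (l:ℕ) → (e ∘ ⇑w') l < (e ∘ ⇑w') k := by
        intro k l hkl
        have hrev : (Fin.revPerm l : Fin r) < Fin.revPerm k := by
          simp only [Fin.revPerm_apply]
          rw [Fin.lt_iff_val_lt_val]
          simp only [Fin.val_rev]
          omega
        exact hsm hrev
      have hne : dgm hf ≠ μ := by
        intro hc
        refine hw0 ⟨w', ?_⟩
        intro k
        have := expo_dgm hf k
        rw [hc] at this
        exact this.symm
      have hperm : ExteriorAlgebra.ιMulti ℚ r (fun k : Fin r => (Polynomial.X : Polynomial ℚ) ^ (e (w' k)))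
          = Equiv.Perm.sign w' • ExteriorAlgebra.ιMulti ℚ r (fun k => Polynomial.X ^ e k) := by
        have : (fun k : Fin r => (Polynomial.X : Polynomial ℚ) ^ (e (w' k)))
            = (fun k : Fin r => (Polynomial.X : Polynomial ℚ) ^ e k) ∘ ⇑w' := rfl
        rw [this]
        exact AlternatingMap.map_perm _ _ _
      have hXdgm : ExteriorAlgebra.ιMulti ℚ r (fun k : Fin r => (Polynomial.X : Polynomial ℚ) ^ (e (w' k)))
          = Xw r (dgm hf) := Xw_dgm hf
      have h0 : inner (Xw r μ) (Xw r (dgm hf)) = 0 := by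
        rw [horth r μ (dgm hf) hμ (dgm_colLen hf), if_neg (fun hc => hne hc.symm)]
      rw [← hXdgm, hperm, sign_smul_eq, map_smul, smul_eq_mul] at h0
      have hs := sgn_mul_self w'
      by_contra hnz
      have : sgn w' * inner (Xw r μ) (ExteriorAlgebra.ιMulti ℚ r fun k => Polynomial.X ^ e k) ≠ 0 := by
        intro hc
        apply hnz
        have := congrArg (fun t => sgn w' * t) hc
        simp only [mul_zero, ← mul_assoc, hs, one_mul] at this
        exact this
      exact this h0
    · rw [AlternatingMap.map_eq_zero_of_not_injective _ _
        (fun hc => heinj (by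
          intro a b hab
          exact hc (by simp [hab])))]
      simp

variable (σ : ℕ → Module.End ℚ EA)
    (hHS : ∀ (j : ℕ) (a b : EA),
      σ j (a * b) = ∑ i ∈ Finset.range (j+1), σ i a * σ (j - i) b)
    (hgen : ∀ (i : ℕ) (u : Polynomial ℚ), σ i (eι u) = eι (Polynomial.X ^ i * u))

include hHS hgen

lemma key (r i : ℕ) (μ ν : YoungDiagram) (hμ : μ.colLen 0 ≤ r) (hν : ν.colLen 0 ≤ r) :
    inner (Xw r μ) (σ i (Xw r ν))
      = if (μ.card = ν.card + i ∧ stripCond (expo r μ) (expo r ν)) then 1 else 0 := by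
  have hm : ∀ k l : Fin r, (k:ℕ) < (l:ℕ) → expo r μ l < expo r μ k :=
    fun k l h => expo_strictAnti r μ h
  have hβ : ∀ k l : Fin r, (k:ℕ) < (l:ℕ) → expo r ν l < expo r ν k :=
    fun k l h => expo_strictAnti r ν h
  have hXν : Xw r ν = (List.ofFn fun k : Fin r => eι ((Polynomial.X : Polynomial ℚ) ^ expo r ν k)).prod := by
    rw [Xw]; rfl
  rw [hXν, sigma_prod σ hHS hgen r i _, map_sum]
  have hterm : ∀ c ∈ Finset.Nat.antidiagonalTuple r i,
      inner (Xw r μ) ((List.ofFn fun k : Fin r =>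
          eι (Polynomial.X ^ (c k) * (Polynomial.X : Polynomial ℚ) ^ expo r ν k)).prod)
        = ∑ w : Equiv.Perm (Fin r), sgn w *
            (if ∀ k, c (w k) + expo r ν (w k) = expo r μ k then 1 else 0) := by
    intro c _
    have h1 : (List.ofFn fun k : Fin r =>
          eι (Polynomial.X ^ (c k) * (Polynomial.X : Polynomial ℚ) ^ expo r ν k)).prod
        = ExteriorAlgebra.ιMulti ℚ r (fun k : Fin r =>
            (Polynomial.X : Polynomial ℚ) ^ (c k + expo r ν k)) := by
      rw [ExteriorAlgebra.ιMulti_apply]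
      simp only [pow_add]
    rw [h1, inner_W inner horth r μ hμ (fun k => c k + expo r ν k)]
  rw [Finset.sum_congr rfl hterm, Finset.sum_comm]
  have hinner : ∀ w : Equiv.Perm (Fin r),
      (∑ c ∈ Finset.Nat.antidiagonalTuple r i,
        (if ∀ k, c (w k) + expo r ν (w k) = expo r μ k then (1:ℚ) else 0))
      = if (μ.card = ν.card + i ∧ ∀ k, expo r ν k ≤ expo r μ (w.symm k)) then 1 else 0 := by
    intro w
    have hsum_m : ∑ k : Fin r, expo r μ (w.symm k) = ∑ k : Fin r, expo r μ k :=
      Equiv.sum_comp w.symm (expo r μ)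
    have hsμ := sum_expo (r := r) hμ
    have hsν := sum_expo (r := r) hν
    by_cases hcond : μ.card = ν.card + i ∧ ∀ k, expo r ν k ≤ expo r μ (w.symm k)
    · rw [if_pos hcond]
      obtain ⟨hcard, hpt⟩ := hcond
      set c₀ : Fin r → ℕ := fun k => expo r μ (w.symm k) - expo r ν k with hc₀
      have hmem : c₀ ∈ Finset.Nat.antidiagonalTuple r i := by
        rw [Finset.Nat.mem_antidiagonalTuple]
        have hsplit : ∑ k : Fin r, c₀ k + ∑ k : Fin r, expo r ν k
            = ∑ k : Fin r, expo r μ (w.symm k) := by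
          rw [← Finset.sum_add_distrib]
          refine Finset.sum_congr rfl ?_
          intro k _
          have := hpt k
          simp only [hc₀]
          omega
        omega
      rw [Finset.sum_eq_single_of_mem c₀ hmem]
      · rw [if_pos]
        intro k
        have h1 := hpt (w k)
        simp only [hc₀, Equiv.symm_apply_apply] at h1 ⊢
        omega
      · intro c _ hne
        rw [if_neg]
        intro hP
        refine hne (funext ?_)
        intro k'
        have := hP (w.symm k')
        simp only [Equiv.apply_symm_apply] at this
        simp only [hc₀]
        omega
    · rw [if_neg hcond]
      refine Finset.sum_eq_zero ?_
      intro c hc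
      rw [if_neg]
      intro hP
      rw [Finset.Nat.mem_antidiagonalTuple] at hc
      refine hcond ⟨?_, ?_⟩
      · have hsplit : ∑ k : Fin r, c k + ∑ k : Fin r, expo r ν k
            = ∑ k : Fin r, expo r μ (w.symm k) := by
          rw [← Finset.sum_add_distrib]
          refine Finset.sum_congr rfl ?_
          intro k _
          have := hP (w.symm k)
          simp only [Equiv.apply_symm_apply] at this
          omega
        omega
      · intro k
        have := hP (w.symm k)
        simp only [Equiv.apply_symm_apply] at this
        omega
  have hmul : ∀ w : Equiv.Perm (Fin r),
      sgn w * (if (μ.card = ν.card + i ∧ ∀ k, expo r ν k ≤ expo r μ (w.symm k)) then (1:ℚ) else 0)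
      = ∑ c ∈ Finset.Nat.antidiagonalTuple r i, sgn w *
          (if ∀ k, c (w k) + expo r ν (w k) = expo r μ k then 1 else 0) := by
    intro w
    rw [← Finset.mul_sum, hinner w]
  rw [Finset.sum_congr rfl (fun w _ => (hmul w).symm)]
  by_cases hcard : μ.card = ν.card + i
  · simp only [hcard, true_and]
    have hre : ∑ w : Equiv.Perm (Fin r),
        sgn w * (if ∀ k, expo r ν k ≤ expo r μ (w.symm k) then (1:ℚ) else 0)
        = ∑ w : Equiv.Perm (Fin r),
        sgn w * (if ∀ k, expo r ν k ≤ expo r μ (w k) then (1:ℚ) else 0) := by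
      refine Fintype.sum_bijective (fun w : Equiv.Perm (Fin r) => w⁻¹)
        (Function.Involutive.bijective (fun w => by simp)) _ _ ?_
      intro w
      have hsgn : sgn w = sgn w⁻¹ := by
        unfold sgn
        rw [Equiv.Perm.sign_inv]
      rw [← hsgn]
      congr 1
    rw [hre]
    have hprod : ∀ w : Equiv.Perm (Fin r),
        (if ∀ k, expo r ν k ≤ expo r μ (w k) then (1:ℚ) else 0)
        = ∏ k : Fin r, (if expo r ν k ≤ expo r μ (w k) then (1:ℚ) else 0) := by
      intro w
      rw [Finset.prod_boole]
      simp
    rw [Finset.sum_congr rfl (fun w _ => by rw [hprod w])]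
    exact stair_sum (expo r μ) (expo r ν) hm hβ
  · rw [if_neg (fun hc => hcard hc.1)]
    refine Finset.sum_eq_zero ?_
    intro w _
    rw [if_neg (fun hc => hcard hc.1), mul_zero]

end Inner

lemma stripCond_rows (r : ℕ) (μ ν : YoungDiagram) (hμ : μ.colLen 0 ≤ r) (hν : ν.colLen 0 ≤ r) :
    stripCond (expo r μ) (expo r ν) ↔
      ∀ k : ℕ, ν.rowLen k ≤ μ.rowLen k ∧ μ.rowLen (k+1) ≤ ν.rowLen k := by
  constructor
  · intro h k
    rcases Nat.lt_or_ge k r with hk | hk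
    · obtain ⟨h1, h2⟩ := h ⟨k, hk⟩
      simp only [expo] at h1
      constructor
      · omega
      · rcases Nat.lt_or_ge (k+1) r with hk1 | hk1
        · have := h2 hk1
          simp only [expo] at this
          omega
        · rw [rowLen_eq_zero_of_le hμ hk1]
          omega
    · rw [rowLen_eq_zero_of_le hν hk, rowLen_eq_zero_of_le hμ (by omega : r ≤ k + 1)]
      omega
  · intro h k
    constructor
    · have := (h (k:ℕ)).1
      simp only [expo]
      omega
    · intro hk1
      have := (h (k:ℕ)).2
      simp only [expo]
      have hkr : (k:ℕ) < r := k.2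
      omega

lemma colLen_le_of_rows {r : ℕ} {μ ν : YoungDiagram} (hμ : μ.colLen 0 ≤ r)
    (h : ∀ k : ℕ, ν.rowLen k ≤ μ.rowLen k) : ν.colLen 0 ≤ r := by
  refine colLen_le_of_rowLen_le ?_
  intro k hk
  have := h k
  rw [rowLen_eq_zero_of_le hμ hk] at this
  omega

lemma rowLens_eq_ofFn (ν : YoungDiagram) :
    ν.rowLens = List.ofFn (fun i : Fin (ν.colLen 0) => ν.rowLen i) := by
  refine List.ext_getElem ?_ ?_
  · simp [YoungDiagram.rowLens]
  · intro n h1 h2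
    simp [YoungDiagram.rowLens]

lemma sum_rowLens_eq_card (ν : YoungDiagram) : ν.rowLens.sum = ν.card := by
  rw [rowLens_eq_ofFn, List.sum_ofFn, card_eq_sum_rowLen (le_refl (ν.colLen 0))]

def mkPart (ν : YoungDiagram) (n : ℕ) (h : ν.card = n) : n.Partition where
  parts := ↑ν.rowLens
  parts_pos := fun hx => ν.pos_of_mem_rowLens _ (by exact_mod_cast hx)
  parts_sum := by
    rw [Multiset.sum_coe, sum_rowLens_eq_card, h]

lemma ofRowLens_congr {w w' : List ℕ} (h : w = w') (hw : w.SortedGE) :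
    YoungDiagram.ofRowLens w hw = YoungDiagram.ofRowLens w' (h ▸ hw) := by
  subst h; rfl

lemma toYD_mkPart (ν : YoungDiagram) (n : ℕ) (h : ν.card = n) :
    toYD (mkPart ν n h) = ν := by
  have hlist : (mkPart ν n h).parts.sort (· ≥ ·) = ν.rowLens := by
    refine List.Perm.eq_of_sortedGE (List.sortedGE_iff_pairwise.mpr (Multiset.pairwise_sort _ _)) ν.rowLens_sorted ?_
    rw [← Multiset.coe_eq_coe, Multiset.sort_eq]
    rfl
  rw [toYD, ofRowLens_congr hlist]
  exact YoungDiagram.ofRowLens_to_rowLens_eq_self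

lemma mkPart_toYD {n : ℕ} (p : n.Partition) (h : (toYD p).card = n) :
    mkPart (toYD p) n h = p := by
  have hrl : (toYD p).rowLens = p.parts.sort (· ≥ ·) := by
    rw [toYD]
    exact YoungDiagram.rowLens_ofRowLens_eq_self
      (fun x hx => p.parts_pos (by
        have := Multiset.mem_sort (· ≥ ·) (s := p.parts) |>.1 (by exact_mod_cast hx)
        exact this))
  refine Nat.Partition.ext ?_
  show ((toYD p).rowLens : Multiset ℕ) = p.parts
  rw [hrl, Multiset.sort_eq]

theorem stmt15 (σ σneg : ℕ → Module.End ℚ (ExteriorAlgebra ℚ (Polynomial ℚ)))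
    (hHS : ∀ (j : ℕ) (a b : ExteriorAlgebra ℚ (Polynomial ℚ)),
      σ j (a * b) = ∑ i ∈ Finset.range (j+1), σ i a * σ (j - i) b)
    (hgen : ∀ (i : ℕ) (u : Polynomial ℚ),
      σ i (ExteriorAlgebra.ι ℚ u) = ExteriorAlgebra.ι ℚ (Polynomial.X ^ i * u))
    (inner : ExteriorAlgebra ℚ (Polynomial ℚ) →ₗ[ℚ] ExteriorAlgebra ℚ (Polynomial ℚ) →ₗ[ℚ] ℚ)
    (horth : ∀ (r : ℕ) (μ ν : YoungDiagram), μ.colLen 0 ≤ r → ν.colLen 0 ≤ r →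
      inner (Xw r μ) (Xw r ν) = if μ = ν then 1 else 0)
    (hadj : ∀ (i : ℕ) (u v : ExteriorAlgebra ℚ (Polynomial ℚ)),
      inner (σneg i u) v = inner u (σ i v))
    (hspan : ∀ (i r : ℕ) (μ : YoungDiagram), μ.colLen 0 ≤ r →
      σneg i (Xw r μ) ∈ Submodule.span ℚ
        {x | ∃ ν : YoungDiagram, ν.colLen 0 ≤ r ∧ x = Xw r ν})
    (r i : ℕ) (μ : YoungDiagram) (hr : μ.colLen 0 ≤ r) :
    σneg i (Xw r μ) =
      ∑ p ∈ Finset.univ.filter (fun p : (μ.card - i).Partition =>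
          (toYD p).card + i = μ.card ∧
          ∀ k, (toYD p).rowLen k ≤ μ.rowLen k ∧ μ.rowLen (k+1) ≤ (toYD p).rowLen k),
        Xw r (toYD p) := by
  classical
  set st : YoungDiagram → Prop := fun ν => μ.card = ν.card + i ∧
      ∀ k, ν.rowLen k ≤ μ.rowLen k ∧ μ.rowLen (k+1) ≤ ν.rowLen k with hst
  have hF1 : ∀ ν : YoungDiagram, ν.colLen 0 ≤ r →
      inner (σneg i (Xw r μ)) (Xw r ν) = if st ν then 1 else 0 := by
    intro ν hν
    rw [hadj, key inner horth σ hHS hgen r i μ ν hr hν]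
    have hiff : (μ.card = ν.card + i ∧ stripCond (expo r μ) (expo r ν)) ↔ st ν :=
      and_congr Iff.rfl (stripCond_rows r μ ν hr hν)
    rw [if_congr hiff rfl rfl]
  have hsp := hspan i r μ hr
  rw [Submodule.mem_span_set'] at hsp
  obtain ⟨n, f, g, hgsum⟩ := hsp
  choose D hD1 hD2 using fun k : Fin n => (g k).2
  set T : Finset YoungDiagram := Finset.image D Finset.univ with hT
  have hTcol : ∀ b ∈ T, b.colLen 0 ≤ r := by
    intro b hb
    rw [hT] at hb
    obtain ⟨k, -, rfl⟩ := Finset.mem_image.1 hb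
    exact hD1 k
  set c : YoungDiagram → ℚ := fun b => ∑ k ∈ Finset.univ.filter (fun k => D k = b), f k with hc
  have hW : σneg i (Xw r μ) = ∑ b ∈ T, c b • Xw r b := by
    rw [← hgsum]
    rw [Finset.sum_congr rfl (fun k _ => by rw [hD2 k])]
    rw [← Finset.sum_fiberwise_of_maps_to
      (fun k _ => Finset.mem_image_of_mem D (Finset.mem_univ k))
      (fun k => f k • Xw r (D k))]
    refine Finset.sum_congr rfl ?_
    intro b _
    rw [hc]
    simp only
    rw [Finset.sum_smul]
    refine Finset.sum_congr rfl ?_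
    intro k hk
    rw [(Finset.mem_filter.1 hk).2]
  have hIW : ∀ ν₀ : YoungDiagram, ν₀.colLen 0 ≤ r →
      inner (σneg i (Xw r μ)) (Xw r ν₀) = if ν₀ ∈ T then c ν₀ else 0 := by
    intro ν₀ hν₀
    rw [hW, map_sum, LinearMap.sum_apply]
    rw [Finset.sum_congr rfl (fun b hb => by
      rw [map_smul, LinearMap.smul_apply, horth r b ν₀ (hTcol b hb) hν₀, smul_eq_mul])]
    by_cases h0 : ν₀ ∈ T
    · rw [if_pos h0, Finset.sum_eq_single_of_mem ν₀ h0]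
      · rw [if_pos rfl, mul_one]
      · intro b _ hne
        rw [if_neg hne, mul_zero]
    · rw [if_neg h0]
      refine Finset.sum_eq_zero ?_
      intro b hb
      rw [if_neg (fun hbe : b = ν₀ => h0 (hbe ▸ hb)), mul_zero]
  have hcval : ∀ b ∈ T, c b = if st b then 1 else 0 := by
    intro b hb
    rw [← hF1 b (hTcol b hb), hIW b (hTcol b hb), if_pos hb]
  have hW2 : σneg i (Xw r μ) = ∑ b ∈ T.filter st, Xw r b := by
    rw [hW, Finset.sum_filter]
    exact Finset.sum_congr rfl
      (fun b hb => by rw [hcval b hb, ite_smul, one_smul, zero_smul])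
  have hstT : ∀ ν, st ν → ν ∈ T := by
    intro ν hstν
    have hν : ν.colLen 0 ≤ r := colLen_le_of_rows hr (fun k => (hstν.2 k).1)
    by_contra hcon
    have h1 := hIW ν hν
    rw [if_neg hcon, hF1 ν hν, if_pos hstν] at h1
    exact one_ne_zero h1
  rw [hW2]
  refine Finset.sum_bij' (fun b hb => mkPart b (μ.card - i)
      (by have := (Finset.mem_filter.1 hb).2.1; omega))
    (fun p _ => toYD p) ?_ ?_ ?_ ?_ ?_
  · intro b hb
    obtain ⟨hbT, hstb⟩ := Finset.mem_filter.1 hb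
    rw [Finset.mem_filter]
    refine ⟨Finset.mem_univ _, ?_, ?_⟩
    · rw [toYD_mkPart]
      have := hstb.1
      omega
    · rw [toYD_mkPart]
      exact hstb.2
  · intro p hp
    obtain ⟨-, hp1, hp2⟩ := Finset.mem_filter.1 hp
    have hstp : st (toYD p) := ⟨by omega, hp2⟩
    exact Finset.mem_filter.2 ⟨hstT _ hstp, hstp⟩
  · intro b hb
    exact toYD_mkPart _ _ _
  · intro p hp
    exact mkPart_toYD p _
  · intro b hb
    rw [toYD_mkPart]

end
end
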